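/- arXiv:math/0508213 — 4 statements merged into one kernel-verified Lean document; each statement's English description precedes it below -/
import Mathlib

section
/- Let I be an open interval containing 0, let X = (X₁,…,Xₙ) and Y = (Y₁,…,Yₙ) be vectors of independent I-valued random variables with finite second moments such that E[Xᵢ] = E[Yᵢ] and E[Xᵢ²] = E[Yᵢ²] for each i, and such that X and Y are independent of each other. Let f : Iⁿ → ℝ be thrice differentiable in each coordinate, set U = f(X) and V = f(Y). Then for every thrice differentiable g : ℝ → ℝ with bounded first three derivatives and every K > 0, |E g(U) − E g(V)| ≤ C₁(g) λ₂(f) Σᵢ₌₁ⁿ [E(Xᵢ²; |Xᵢ| > K) + E(Yᵢ²; |Yᵢ| > K)] + C₂(g) λ₃(f) Σᵢ₌₁ⁿ [E(|Xᵢ|³; |Xᵢ| ≤ K) + E(|Yᵢ|³; |Yᵢ| ≤ K)]. -/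
open MeasureTheory ProbabilityTheory

/-- The `p`-fold partial derivative of `f` in the `i`-th coordinate, at `x`. -/
noncomputable def pderiv (n : ℕ) (f : (Fin n → ℝ) → ℝ) (i : Fin n) (p : ℕ)
    (x : Fin n → ℝ) : ℝ :=
  iteratedDeriv p (fun t => f (Function.update x i t)) (x i)

/-- `f` is thrice differentiable in each coordinate on `Iⁿ`. -/
def CoordDiff3 (n : ℕ) (I : Set ℝ) (f : (Fin n → ℝ) → ℝ) : Prop :=
  ∀ (i : Fin n) (x : Fin n → ℝ), (∀ j, x j ∈ I) →
    ∀ p < 3, DifferentiableOn ℝ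
      (iteratedDeriv p fun t => f (Function.update x i t)) I

/-- The set whose supremum is `λ_r(f)`. -/
def lamSet (n : ℕ) (I : Set ℝ) (f : (Fin n → ℝ) → ℝ) (r : ℕ) : Set ℝ :=
  { y | ∃ (i : Fin n) (p : ℕ) (x : Fin n → ℝ),
      1 ≤ p ∧ p ≤ r ∧ (∀ j, x j ∈ I) ∧
      y = |pderiv n f i p x| ^ ((r : ℝ) / (p : ℝ)) }

/-- `λ_r(f) = sup { |∂ᵢᵖ f(x)|^{r/p} : 1 ≤ i ≤ n, 1 ≤ p ≤ r, x ∈ Iⁿ }`. -/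
noncomputable def lam (n : ℕ) (I : Set ℝ) (f : (Fin n → ℝ) → ℝ) (r : ℕ) : ℝ :=
  sSup (lamSet n I f r)

/-!
Lindeberg's replacement method. Replacing the coordinates of `X` by those of `Y` one at a time
telescopes `E g(f X) - E g(f Y)` into `n` single-coordinate swaps. For the `i`-th swap let `W` be
the current hybrid vector with its `i`-th coordinate set to `0`, so that `W` is independent of both
`Xᵢ` and `Yᵢ`, and expand `ψ(t) = g (f (W with t at i))` to second order at `0`. Faà di Bruno and
the definition of `λ_r` (with `|∂f| |∂²f| ≤ λ₃`, from `|∂f|³ ≤ λ₃` and `|∂²f|^{3/2} ≤ λ₃`) bound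
the remainder by `min (C₁(g) λ₂(f) t², C₂(g) λ₃(f) |t|³)`; the first bound is used on `|t| > K`,
the second on `|t| ≤ K`. By independence the first- and second-order terms contribute only through
the first two moments of `Xᵢ`, resp. `Yᵢ`, which agree.

As `f` is only separately differentiable, `ψ'(0)` and `ψ''(0)` are seen to be `σ(W)`-measurable
by writing them as limits of difference quotients.
-/

open Set Filter Topology

theorem abs_sub_le_of_abs_hasDerivAt_le_of_nonneg {h h' : ℝ → ℝ} {C t : ℝ} {k : ℕ}
    (ht : 0 ≤ t) (hd : ∀ s ∈ Icc 0 t, HasDerivAt h (h' s) s)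
    (hb : ∀ s ∈ Icc 0 t, |h' s| ≤ C * s ^ k) :
    |h t - h 0| ≤ C * t ^ (k + 1) / (k + 1) := by
  set B : ℝ → ℝ := fun s => C * s ^ (k + 1) / (k + 1)
  have hB : ∀ s, HasDerivAt B (C * s ^ k) s := fun s => by
    refine (((hasDerivAt_pow (k + 1) s).const_mul C).div_const ((k : ℝ) + 1)).congr_deriv ?_
    rw [Nat.add_sub_cancel]; push_cast; field_simp
  have hmono : ∀ ε : ℝ, ε = 1 ∨ ε = -1 → MonotoneOn (fun s => B s + ε * h s) (Icc 0 t) := by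
    rintro ε hε
    refine monotoneOn_of_hasDerivWithinAt_nonneg (convex_Icc 0 t)
      (fun s hs => ((hB s).add ((hd s hs).const_mul ε)).continuousAt.continuousWithinAt)
      (fun s hs => ((hB s).add ((hd s (interior_subset hs)).const_mul ε)).hasDerivWithinAt)
      (fun s hs => ?_)
    have := abs_le.1 (hb s (interior_subset hs))
    rcases hε with rfl | rfl <;> linarith [this.1, this.2]
  have h1 := hmono 1 (Or.inl rfl) ⟨le_rfl, ht⟩ ⟨ht, le_rfl⟩ ht
  have h2 := hmono (-1) (Or.inr rfl) ⟨le_rfl, ht⟩ ⟨ht, le_rfl⟩ ht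
  have hB0 : B 0 = 0 := by simp [B]
  simp only [hB0] at h1 h2
  rw [abs_le]; constructor <;> linarith

theorem Set.OrdConnected.abs_sub_le_of_abs_hasDerivAt_le {I : Set ℝ} (hI : I.OrdConnected)
    (h0 : (0 : ℝ) ∈ I) {h h' : ℝ → ℝ} {C : ℝ} {k : ℕ}
    (hd : ∀ s ∈ I, HasDerivAt h (h' s) s) (hb : ∀ s ∈ I, |h' s| ≤ C * |s| ^ k) {t : ℝ}
    (ht : t ∈ I) : |h t - h 0| ≤ C * |t| ^ (k + 1) / (k + 1) := by
  have hsub : ∀ s ∈ uIcc 0 t, s ∈ I := fun s hs => hI.uIcc_subset h0 ht hs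
  rcases le_total 0 t with ht0 | ht0
  · rw [abs_of_nonneg ht0]
    refine abs_sub_le_of_abs_hasDerivAt_le_of_nonneg ht0
      (fun s hs => hd s (hsub s (Icc_subset_uIcc hs))) (fun s hs => ?_)
    simpa [abs_of_nonneg hs.1] using hb s (hsub s (Icc_subset_uIcc hs))
  · have hneg : ∀ s ∈ Icc 0 (-t), -s ∈ I := fun s hs =>
      hsub _ (Icc_subset_uIcc' ⟨by linarith [hs.2], by linarith [hs.1]⟩)
    have := abs_sub_le_of_abs_hasDerivAt_le_of_nonneg (h := fun s => h (-s))
      (h' := fun s => -h' (-s)) (neg_nonneg.2 ht0)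
      (fun s hs => ((hd (-s) (hneg s hs)).comp s (hasDerivAt_neg s)).congr_deriv (mul_neg_one _))
      (fun s hs => by simpa [abs_of_nonneg hs.1] using hb (-s) (hneg s hs))
    simpa [abs_of_nonpos ht0] using this

theorem Set.OrdConnected.abs_taylor_remainder_le {I : Set ℝ} (hI : I.OrdConnected)
    (h0 : (0 : ℝ) ∈ I) {ψ ψ1 ψ2 ψ3 : ℝ → ℝ} {M2 M3 : ℝ}
    (h1 : ∀ s ∈ I, HasDerivAt ψ (ψ1 s) s) (h2 : ∀ s ∈ I, HasDerivAt ψ1 (ψ2 s) s)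
    (h3 : ∀ s ∈ I, HasDerivAt ψ2 (ψ3 s) s)
    (hM2 : ∀ s ∈ I, |ψ2 s| ≤ M2) (hM3 : ∀ s ∈ I, |ψ3 s| ≤ M3) {t : ℝ} (ht : t ∈ I) :
    |ψ t - ψ 0 - ψ1 0 * t - ψ2 0 * t ^ 2 / 2| ≤ min (M2 * t ^ 2) (M3 / 6 * |t| ^ 3) := by
  set r : ℝ → ℝ := fun s => ψ s - ψ 0 - ψ1 0 * s - ψ2 0 * s ^ 2 / 2
  set r' : ℝ → ℝ := fun s => ψ1 s - ψ1 0 - ψ2 0 * s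
  have hr : ∀ s ∈ I, HasDerivAt r (r' s) s := fun s hs =>
    ((((h1 s hs).sub_const _).sub ((hasDerivAt_id s).const_mul _)).sub
      (((hasDerivAt_pow 2 s).const_mul _).div_const 2)).congr_deriv (by simp; ring)
  have hr' : ∀ s ∈ I, HasDerivAt r' (ψ2 s - ψ2 0) s := fun s hs =>
    (((h2 s hs).sub_const _).sub ((hasDerivAt_id s).const_mul _)).congr_deriv (by simp)
  have hr'' : ∀ s ∈ I, HasDerivAt (fun s => ψ2 s - ψ2 0) (ψ3 s) s := fun s hs =>
    (h3 s hs).sub_const _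
  have hr0 : r 0 = 0 := by simp [r]
  have hr'0 : r' 0 = 0 := by simp [r']
  have step {h h' : ℝ → ℝ} {C : ℝ} {k : ℕ} (hd : ∀ s ∈ I, HasDerivAt h (h' s) s)
      (hb : ∀ s ∈ I, |h' s| ≤ C * |s| ^ k) (h00 : h 0 = 0) :
      ∀ s ∈ I, |h s| ≤ C / (k + 1) * |s| ^ (k + 1) := fun s hs => by
    have := hI.abs_sub_le_of_abs_hasDerivAt_le h0 hd hb hs
    rw [h00, sub_zero] at this
    exact this.trans_eq (by ring)
  -- `r'' = ψ2 - ψ2 0` is bounded both by `2 * M2` and by `M3 * |s|`; integrate twice.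
  refine le_min ?_ ?_
  · have e2 : ∀ s ∈ I, |ψ2 s - ψ2 0| ≤ 2 * M2 * |s| ^ 0 := fun s hs => by
      simpa [two_mul] using (abs_sub _ _).trans (add_le_add (hM2 s hs) (hM2 0 h0))
    have e1 := step hr' e2 hr'0
    have e0 := step hr (k := 1) (fun s hs => by simpa using e1 s hs) hr0 t ht
    refine e0.trans_eq ?_
    norm_num [sq_abs]
  · have e2 := step hr'' (k := 0) (fun s hs => by simpa using hM3 s hs) (by simp)
    have e1 := step hr' (k := 1) (fun s hs => by simpa using e2 s hs) hr'0
    have e0 := step hr (k := 2) e1 hr0 t ht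
    exact e0.trans_eq (by push_cast; ring)

theorem DifferentiableAt.hasDerivAt_iteratedDeriv {f : ℝ → ℝ} {p : ℕ} {t : ℝ}
    (h : DifferentiableAt ℝ (iteratedDeriv p f) t) :
    HasDerivAt (iteratedDeriv p f) (iteratedDeriv (p + 1) f t) t := by
  rw [iteratedDeriv_succ]; exact h.hasDerivAt

section CompDeriv

variable (g F : ℝ → ℝ)

noncomputable def compDeriv1 (t : ℝ) : ℝ := deriv g (F t) * deriv F t

noncomputable def compDeriv2 (t : ℝ) : ℝ :=
  iteratedDeriv 2 g (F t) * deriv F t ^ 2 + deriv g (F t) * iteratedDeriv 2 F t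

noncomputable def compDeriv3 (t : ℝ) : ℝ :=
  iteratedDeriv 3 g (F t) * deriv F t ^ 3
    + 3 * iteratedDeriv 2 g (F t) * (deriv F t * iteratedDeriv 2 F t)
    + deriv g (F t) * iteratedDeriv 3 F t

variable {g F}

theorem hasDerivAt_comp_compDeriv (hg : ∀ p < 3, Differentiable ℝ (iteratedDeriv p g)) {t : ℝ}
    (hF : ∀ p < 3, DifferentiableAt ℝ (iteratedDeriv p F) t) :
    HasDerivAt (fun s => g (F s)) (compDeriv1 g F t) t ∧
      HasDerivAt (compDeriv1 g F) (compDeriv2 g F t) t ∧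
      HasDerivAt (compDeriv2 g F) (compDeriv3 g F t) t := by
  have dg : ∀ p < 3, HasDerivAt (fun s => iteratedDeriv p g (F s))
      (iteratedDeriv (p + 1) g (F t) * deriv F t) t := fun p hp =>
    ((hg p hp (F t)).hasDerivAt_iteratedDeriv).comp t
      (by simpa using (hF 0 (by norm_num)).hasDerivAt_iteratedDeriv)
  have dF : ∀ p < 3, HasDerivAt (iteratedDeriv p F) (iteratedDeriv (p + 1) F t) t :=
    fun p hp => (hF p hp).hasDerivAt_iteratedDeriv
  have dg0 := dg 0 (by norm_num)
  have dg1 := dg 1 (by norm_num)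
  have dF1 := dF 1 (by norm_num)
  simp only [iteratedDeriv_zero, iteratedDeriv_one, zero_add] at dg0 dg1 dF1
  refine ⟨dg0, ?_, ?_⟩
  · exact (dg1.mul dF1).congr_deriv (by simp only [compDeriv2]; ring)
  · have := ((dg 2 (by norm_num)).mul (dF1.pow 2)).add (dg1.mul (dF 2 (by norm_num)))
    exact this.congr_deriv (by simp only [compDeriv3, Pi.pow_apply]; push_cast; ring)

end CompDeriv

section CompDerivBounds

variable {g F : ℝ → ℝ} {B1 B2 B3 L t : ℝ}

theorem abs_compDeriv1_le (hB1 : ∀ y, |deriv g y| ≤ B1) (h1 : deriv F t ^ 2 ≤ L) :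
    |compDeriv1 g F t| ≤ B1 * √L := by
  have hF : |deriv F t| ≤ √L := by rw [← Real.sqrt_sq_eq_abs]; exact Real.sqrt_le_sqrt h1
  rw [compDeriv1, abs_mul]
  exact mul_le_mul (hB1 _) hF (abs_nonneg _) ((abs_nonneg _).trans (hB1 0))

theorem abs_compDeriv2_le (hB1 : ∀ y, |deriv g y| ≤ B1) (hB2 : ∀ y, |iteratedDeriv 2 g y| ≤ B2)
    (h1 : deriv F t ^ 2 ≤ L) (h2 : |iteratedDeriv 2 F t| ≤ L) :
    |compDeriv2 g F t| ≤ (B1 + B2) * L := by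
  have hB1' := (abs_nonneg _).trans (hB1 0)
  have hB2' := (abs_nonneg _).trans (hB2 0)
  calc |compDeriv2 g F t|
      ≤ |iteratedDeriv 2 g (F t)| * deriv F t ^ 2 + |deriv g (F t)| * |iteratedDeriv 2 F t| := by
        refine (abs_add_le _ _).trans_eq ?_
        simp only [abs_mul, abs_pow, sq_abs]
    _ ≤ B2 * L + B1 * L := by gcongr <;> simp [hB1, hB2]
    _ = (B1 + B2) * L := by ring

theorem abs_compDeriv3_le (hB1 : ∀ y, |deriv g y| ≤ B1) (hB2 : ∀ y, |iteratedDeriv 2 g y| ≤ B2)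
    (hB3 : ∀ y, |iteratedDeriv 3 g y| ≤ B3) (h1 : |deriv F t| ^ 3 ≤ L)
    (h12 : |deriv F t| * |iteratedDeriv 2 F t| ≤ L) (h3 : |iteratedDeriv 3 F t| ≤ L) :
    |compDeriv3 g F t| ≤ (B1 + 3 * B2 + B3) * L := by
  have hB1' := (abs_nonneg _).trans (hB1 0)
  have hB2' := (abs_nonneg _).trans (hB2 0)
  have hB3' := (abs_nonneg _).trans (hB3 0)
  calc |compDeriv3 g F t|
      ≤ |iteratedDeriv 3 g (F t)| * |deriv F t| ^ 3
        + 3 * |iteratedDeriv 2 g (F t)| * (|deriv F t| * |iteratedDeriv 2 F t|)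
        + |deriv g (F t)| * |iteratedDeriv 3 F t| := by
        rw [compDeriv3]
        refine (abs_add_le _ _).trans (add_le_add ((abs_add_le _ _).trans_eq ?_) (abs_mul _ _).le)
        simp only [abs_mul, abs_pow, Nat.abs_ofNat]
    _ ≤ B3 * L + 3 * B2 * L + B1 * L := by gcongr <;> simp [hB1, hB2, hB3]
    _ = (B1 + 3 * B2 + B3) * L := by ring

end CompDerivBounds

section Hybrid

variable {n : ℕ} {α : Type*}

def hybrid (x y : Fin n → α) (k : ℕ) : Fin n → α := fun j => if (j : ℕ) < k then y j else x j

theorem hybrid_apply_of_forall {P : α → Prop} {x y : Fin n → α} (hx : ∀ j, P (x j))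
    (hy : ∀ j, P (y j)) (k : ℕ) (j : Fin n) : P (hybrid x y k j) := by
  unfold hybrid; split_ifs
  exacts [hy j, hx j]

theorem update_hybrid_apply_of_forall {P : α → Prop} {x y : Fin n → α} {a : α} (ha : P a)
    (hx : ∀ j, P (x j)) (hy : ∀ j, P (y j)) (i j : Fin n) :
    P (Function.update (hybrid x y i) i a j) := by
  rcases eq_or_ne j i with rfl | h
  · simpa using ha
  · rw [Function.update_of_ne h]; exact hybrid_apply_of_forall hx hy i j

theorem sub_eq_sum_hybrid {M : Type*} [AddCommGroup M] (F : (Fin n → α) → M) (x y : Fin n → α) :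
    F x - F y = ∑ i : Fin n,
      (F (Function.update (hybrid x y i) i (x i))
        - F (Function.update (hybrid x y i) i (y i))) := by
  have hx : ∀ i : Fin n, Function.update (hybrid x y i) i (x i) = hybrid x y i := fun i =>
    Function.update_eq_self_iff.2 (by simp [hybrid])
  have hy : ∀ i : Fin n, Function.update (hybrid x y i) i (y i) = hybrid x y (i + 1) := by
    intro i; funext j
    rcases eq_or_ne j i with rfl | h
    · simp [hybrid]
    · have : (j : ℕ) ≠ i := fun h' => h (Fin.ext h')
      simp only [Function.update_of_ne h, hybrid]
      congr 1; apply propext; omega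
  have h0 : hybrid x y 0 = x := funext fun j => by simp [hybrid]
  have hn : hybrid x y n = y := funext fun j => by simp [hybrid]
  simp only [hx, hy]
  rw [Fin.sum_univ_eq_sum_range (fun k => F (hybrid x y k) - F (hybrid x y (k + 1))) n,
    Finset.sum_range_sub', h0, hn]

end Hybrid

section Slice

variable {n : ℕ} {I : Set ℝ} {f : (Fin n → ℝ) → ℝ}

def slice (f : (Fin n → ℝ) → ℝ) (x : Fin n → ℝ) (i : Fin n) : ℝ → ℝ :=
  fun t => f (Function.update x i t)

theorem update_mem_box {x : Fin n → ℝ} (hx : ∀ j, x j ∈ I) (i : Fin n) {t : ℝ} (ht : t ∈ I) :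
    ∀ j, Function.update x i t j ∈ I := fun j => by
  rcases eq_or_ne j i with rfl | h <;> simp [*]

theorem iteratedDeriv_slice (x : Fin n → ℝ) (i : Fin n) (p : ℕ) (t : ℝ) :
    iteratedDeriv p (slice f x i) t = pderiv n f i p (Function.update x i t) := by
  simp only [pderiv, Function.update_self, Function.update_idem]; rfl

theorem CoordDiff3.differentiableAt_slice (hf : CoordDiff3 n I f) (hI : IsOpen I)
    {x : Fin n → ℝ} (hx : ∀ j, x j ∈ I) (i : Fin n) {t : ℝ} (ht : t ∈ I) :
    ∀ p < 3, DifferentiableAt ℝ (iteratedDeriv p (slice f x i)) t := fun p hp =>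
  (hf i x hx p hp).differentiableAt (hI.mem_nhds ht)

theorem abs_pderiv_rpow_le_lam {r : ℕ} (hbdd : BddAbove (lamSet n I f r)) (i : Fin n) {p : ℕ}
    (hp : 1 ≤ p) (hpr : p ≤ r) {x : Fin n → ℝ} (hx : ∀ j, x j ∈ I) :
    |pderiv n f i p x| ^ ((r : ℝ) / p) ≤ lam n I f r :=
  le_csSup hbdd ⟨i, p, x, hp, hpr, hx, rfl⟩

variable {x : Fin n → ℝ} (i : Fin n)

theorem pderiv_one_sq_le_lam_two (hbdd : BddAbove (lamSet n I f 2)) (hx : ∀ j, x j ∈ I) :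
    pderiv n f i 1 x ^ 2 ≤ lam n I f 2 := by
  simpa using abs_pderiv_rpow_le_lam hbdd i le_rfl one_le_two hx

theorem abs_pderiv_two_le_lam_two (hbdd : BddAbove (lamSet n I f 2)) (hx : ∀ j, x j ∈ I) :
    |pderiv n f i 2 x| ≤ lam n I f 2 := by
  simpa using abs_pderiv_rpow_le_lam hbdd i one_le_two le_rfl hx

theorem abs_pderiv_one_pow_three_le_lam_three (hbdd : BddAbove (lamSet n I f 3))
    (hx : ∀ j, x j ∈ I) : |pderiv n f i 1 x| ^ 3 ≤ lam n I f 3 := by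
  simpa using abs_pderiv_rpow_le_lam hbdd i le_rfl (by norm_num) hx

theorem abs_pderiv_three_le_lam_three (hbdd : BddAbove (lamSet n I f 3)) (hx : ∀ j, x j ∈ I) :
    |pderiv n f i 3 x| ≤ lam n I f 3 := by
  simpa using abs_pderiv_rpow_le_lam hbdd i (by norm_num) le_rfl hx

theorem abs_pderiv_one_mul_abs_pderiv_two_le_lam_three (hbdd : BddAbove (lamSet n I f 3))
    (hx : ∀ j, x j ∈ I) : |pderiv n f i 1 x| * |pderiv n f i 2 x| ≤ lam n I f 3 := by
  set a := |pderiv n f i 1 x|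
  set b := |pderiv n f i 2 x|
  set L := lam n I f 3
  have ha : a ^ 3 ≤ L := abs_pderiv_one_pow_three_le_lam_three i hbdd hx
  have hb : b ^ ((3 : ℝ) / 2) ≤ L := by
    simpa using abs_pderiv_rpow_le_lam hbdd i one_le_two (by norm_num) hx
  have hL : 0 ≤ L := (pow_nonneg (abs_nonneg _) 3).trans ha
  have hb3 : b ^ 3 ≤ L ^ 2 := by
    have := pow_le_pow_left₀ (Real.rpow_nonneg (abs_nonneg _) _) hb 2
    rw [← Real.rpow_mul_natCast (abs_nonneg _)] at this
    norm_num at this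
    exact this
  refine le_of_pow_le_pow_left₀ three_ne_zero hL ?_
  calc (a * b) ^ 3 = a ^ 3 * b ^ 3 := mul_pow a b 3
    _ ≤ L * L ^ 2 := mul_le_mul ha hb3 (pow_nonneg (abs_nonneg _) 3) hL
    _ = L ^ 3 := by ring

end Slice

section SliceComp

variable {n : ℕ} {I : Set ℝ} {f : (Fin n → ℝ) → ℝ} {g : ℝ → ℝ} {B1 B2 B3 : ℝ}
  {x : Fin n → ℝ} {i : Fin n} {t : ℝ}

theorem deriv_slice (x : Fin n → ℝ) (i : Fin n) (t : ℝ) :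
    deriv (slice f x i) t = pderiv n f i 1 (Function.update x i t) := by
  rw [← iteratedDeriv_one, iteratedDeriv_slice]

theorem abs_deriv_slice_le (hbdd2 : BddAbove (lamSet n I f 2)) (hx : ∀ j, x j ∈ I)
    (ht : t ∈ I) : |deriv (slice f x i) t| ≤ √(lam n I f 2) := by
  rw [← Real.sqrt_sq_eq_abs, deriv_slice]
  exact Real.sqrt_le_sqrt (pderiv_one_sq_le_lam_two i hbdd2 (update_mem_box hx i ht))

theorem abs_compDeriv1_slice_le (hbdd2 : BddAbove (lamSet n I f 2))
    (hB1 : ∀ y, |deriv g y| ≤ B1) (hx : ∀ j, x j ∈ I) (ht : t ∈ I) :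
    |compDeriv1 g (slice f x i) t| ≤ B1 * √(lam n I f 2) :=
  abs_compDeriv1_le hB1 (by
    rw [deriv_slice]; exact pderiv_one_sq_le_lam_two i hbdd2 (update_mem_box hx i ht))

theorem abs_compDeriv2_slice_le (hbdd2 : BddAbove (lamSet n I f 2))
    (hB1 : ∀ y, |deriv g y| ≤ B1) (hB2 : ∀ y, |iteratedDeriv 2 g y| ≤ B2)
    (hx : ∀ j, x j ∈ I) (ht : t ∈ I) :
    |compDeriv2 g (slice f x i) t| ≤ (B1 + B2) * lam n I f 2 := by
  have hy := update_mem_box hx i ht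
  refine abs_compDeriv2_le hB1 hB2 ?_ ?_
  · rw [deriv_slice]; exact pderiv_one_sq_le_lam_two i hbdd2 hy
  · rw [iteratedDeriv_slice]; exact abs_pderiv_two_le_lam_two i hbdd2 hy

theorem abs_compDeriv3_slice_le (hbdd3 : BddAbove (lamSet n I f 3))
    (hB1 : ∀ y, |deriv g y| ≤ B1) (hB2 : ∀ y, |iteratedDeriv 2 g y| ≤ B2)
    (hB3 : ∀ y, |iteratedDeriv 3 g y| ≤ B3) (hx : ∀ j, x j ∈ I) (ht : t ∈ I) :
    |compDeriv3 g (slice f x i) t| ≤ (B1 + 3 * B2 + B3) * lam n I f 3 := by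
  have hy := update_mem_box hx i ht
  refine abs_compDeriv3_le hB1 hB2 hB3 ?_ ?_ ?_ <;>
    simp only [deriv_slice, iteratedDeriv_slice]
  · exact abs_pderiv_one_pow_three_le_lam_three i hbdd3 hy
  · exact abs_pderiv_one_mul_abs_pderiv_two_le_lam_three i hbdd3 hy
  · exact abs_pderiv_three_le_lam_three i hbdd3 hy

theorem abs_comp_slice_taylor_le (hIopen : IsOpen I) (hIconn : I.OrdConnected)
    (hI0 : (0 : ℝ) ∈ I) (hf : CoordDiff3 n I f) (hbdd2 : BddAbove (lamSet n I f 2))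
    (hbdd3 : BddAbove (lamSet n I f 3)) (hg : ∀ p < 3, Differentiable ℝ (iteratedDeriv p g))
    (hB1 : ∀ y, |deriv g y| ≤ B1) (hB2 : ∀ y, |iteratedDeriv 2 g y| ≤ B2)
    (hB3 : ∀ y, |iteratedDeriv 3 g y| ≤ B3) (hx : ∀ j, x j ∈ I) (ht : t ∈ I) :
    |g (slice f x i t) - g (slice f x i 0) - compDeriv1 g (slice f x i) 0 * t
        - compDeriv2 g (slice f x i) 0 * t ^ 2 / 2|
      ≤ min ((B1 + B2) * lam n I f 2 * t ^ 2) ((B1 + 3 * B2 + B3) * lam n I f 3 / 6 * |t| ^ 3) :=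
  have hd := fun s (hs : s ∈ I) =>
    hasDerivAt_comp_compDeriv hg (hf.differentiableAt_slice hIopen hx i hs)
  hIconn.abs_taylor_remainder_le hI0 (fun _ hs => (hd _ hs).1) (fun _ hs => (hd _ hs).2.1)
    (fun _ hs => (hd _ hs).2.2) (fun _ hs => abs_compDeriv2_slice_le hbdd2 hB1 hB2 hx hs)
    (fun _ hs => abs_compDeriv3_slice_le hbdd3 hB1 hB2 hB3 hx hs) ht

end SliceComp

section Box

variable {n : ℕ} {I : Set ℝ} {f : (Fin n → ℝ) → ℝ}

theorem abs_slice_sub_le (hIopen : IsOpen I) (hIconn : I.OrdConnected) (hf : CoordDiff3 n I f)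
    (hbdd2 : BddAbove (lamSet n I f 2)) {x : Fin n → ℝ} (hx : ∀ j, x j ∈ I) (i : Fin n)
    {s t : ℝ} (hs : s ∈ I) (ht : t ∈ I) :
    |slice f x i s - slice f x i t| ≤ √(lam n I f 2) * |s - t| :=
  hIconn.convex.norm_image_sub_le_of_norm_deriv_le
    (fun c hc => by simpa using hf.differentiableAt_slice hIopen hx i hc 0 (by norm_num))
    (fun c hc => abs_deriv_slice_le hbdd2 hx hc) ht hs

theorem abs_sub_le_of_mem_box (hIopen : IsOpen I) (hIconn : I.OrdConnected)
    (hf : CoordDiff3 n I f) (hbdd2 : BddAbove (lamSet n I f 2)) {x y : Fin n → ℝ}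
    (hx : ∀ j, x j ∈ I) (hy : ∀ j, y j ∈ I) :
    |f x - f y| ≤ √(lam n I f 2) * ∑ j, |x j - y j| := by
  rw [sub_eq_sum_hybrid f x y, Finset.mul_sum]
  refine (Finset.abs_sum_le_sum_abs _ _).trans (Finset.sum_le_sum fun i _ => ?_)
  exact abs_slice_sub_le hIopen hIconn hf hbdd2
    (hybrid_apply_of_forall (P := (· ∈ I)) hx hy i) i (hx i) (hy i)

theorem continuousOn_of_mem_box (hIopen : IsOpen I) (hIconn : I.OrdConnected)
    (hf : CoordDiff3 n I f) (hbdd2 : BddAbove (lamSet n I f 2)) :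
    ContinuousOn f (Set.univ.pi fun _ => I) := by
  refine (LipschitzOnWith.of_dist_le_mul (K := ⟨√(lam n I f 2) * n, by positivity⟩)
    fun x hx y hy => ?_).continuousOn
  rw [Set.mem_univ_pi] at hx hy
  calc dist (f x) (f y) ≤ √(lam n I f 2) * ∑ j, |x j - y j| :=
        abs_sub_le_of_mem_box hIopen hIconn hf hbdd2 hx hy
    _ ≤ √(lam n I f 2) * ∑ _j : Fin n, dist x y := by
        gcongr with j; exact dist_le_pi_dist x y j
    _ = _ := by
        simp only [Finset.sum_const, Finset.card_univ, Fintype.card_fin, nsmul_eq_mul]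
        exact (mul_assoc _ _ _).symm

end Box

theorem ContinuousOn.measurable_comp {α E F : Type*} {mα : MeasurableSpace α}
    [TopologicalSpace E] [MeasurableSpace E] [OpensMeasurableSpace E]
    [TopologicalSpace F] [MeasurableSpace F] [BorelSpace F] {φ : E → F} {s : Set E}
    (hφ : ContinuousOn φ s) {V : α → E} (hV : Measurable V) (hVs : ∀ a, V a ∈ s) :
    Measurable fun a => φ (V a) :=
  hφ.domRestrict.measurable.comp (hV.subtype_mk (h := hVs))

theorem measurable_of_hasDerivAt {α : Type*} {mα : MeasurableSpace α} {F : α → ℝ → ℝ}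
    {F' : α → ℝ} {c : ℝ} (hF : ∀ᶠ t in 𝓝 c, Measurable fun a => F a t)
    (hd : ∀ a, HasDerivAt (F a) (F' a) c) : Measurable F' := by
  classical
  -- Slopes through points `t` where `F · t` is not known to be measurable are replaced by `0`,
  -- which does not affect the limit at `c`.
  set q : ℝ → α → ℝ := fun t a => if Measurable (fun a => F a t) then slope (F a) c t else 0
  refine measurable_of_tendsto_metrizable' (𝓝[≠] c) (f := q) (fun t => ?_)
    (tendsto_pi_nhds.2 fun a => ((hasDerivAt_iff_tendsto_slope.1 (hd a)).congr' ?_))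
  · by_cases ht : Measurable (fun a => F a t)
    · simpa [q, ht, slope_def_field] using (ht.sub hF.self_of_nhds).div_const (t - c)
    · simp [q, ht]
  · filter_upwards [nhdsWithin_le_nhds hF] with t ht
    simp [q, ht]

theorem ProbabilityTheory.IndepFun.of_measurable_comap_left {Ω β γ δ : Type*}
    {mΩ : MeasurableSpace Ω} {μ : Measure Ω} [mβ : MeasurableSpace β]
    [MeasurableSpace γ] [MeasurableSpace δ] {f : Ω → β} {g : Ω → γ} {h : Ω → δ}
    (hfg : IndepFun f g μ) (hh : Measurable[mβ.comap f] h) :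
    IndepFun h g μ := by
  rw [IndepFun_iff_Indep] at hfg ⊢
  exact indep_of_indep_of_le_left hfg hh.comap_le

theorem ProbabilityTheory.iIndepFun.indepFun_of_measurable_iSup {Ω ι γ : Type*}
    {mΩ : MeasurableSpace Ω} {μ : Measure Ω} {β : ι → Type*}
    {m : ∀ i, MeasurableSpace (β i)} [MeasurableSpace γ] {Z : ∀ i, Ω → β i}
    (hZ : iIndepFun Z μ) (hZm : ∀ i, Measurable (Z i)) {S : Set ι} {k : ι}
    (hk : k ∉ S) {V : Ω → γ} (hV : Measurable[⨆ i ∈ S, (m i).comap (Z i)] V) :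
    IndepFun V (Z k) μ := by
  rw [IndepFun_iff_Indep]
  have := indep_iSup_of_disjoint (fun i => (hZm i).comap_le) hZ.iIndep
    (Set.disjoint_singleton_right.2 hk)
  refine indep_of_indep_of_le_right
    (indep_of_indep_of_le_left this hV.comap_le) ?_
  exact le_iSup₂ (f := fun i (_ : i ∈ ({k} : Set ι)) => (m i).comap (Z i)) k rfl

section Expansion

variable {Ω : Type*} {mΩ : MeasurableSpace Ω} {μ : Measure Ω}

theorem abs_integral_le_of_abs_le_min {R ζ : Ω → ℝ} {A B : ℝ} (K : ℝ) (hζ : Measurable ζ)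
    (hζ2 : MemLp ζ 2 μ) (hR : AEStronglyMeasurable R μ)
    (hb : ∀ ω, |R ω| ≤ min (A * ζ ω ^ 2) (B * |ζ ω| ^ 3)) :
    |∫ ω, R ω ∂μ| ≤ A * (∫ ω in {ω | K < |ζ ω|}, ζ ω ^ 2 ∂μ)
      + B * ∫ ω in {ω | |ζ ω| ≤ K}, |ζ ω| ^ 3 ∂μ := by
  have hsq : Integrable (fun ω => ζ ω ^ 2) μ := hζ2.integrable_sq
  have hRi : Integrable R μ := (hsq.const_mul A).mono' hR
    (ae_of_all _ fun ω => (hb ω).trans (min_le_left _ _))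
  have hS : MeasurableSet {ω | K < |ζ ω|} := measurableSet_lt measurable_const hζ.abs
  have hSc : {ω | K < |ζ ω|}ᶜ = {ω | |ζ ω| ≤ K} := by ext; simp
  have hcube : IntegrableOn (fun ω => B * |ζ ω| ^ 3) {ω | |ζ ω| ≤ K} μ := by
    refine (hsq.const_mul (|B| * K)).integrableOn.mono'
      ((hζ.abs.pow_const 3).const_mul B).aestronglyMeasurable
      ((ae_restrict_iff' (hSc ▸ hS.compl)).2 (ae_of_all _ fun ω (hω : |ζ ω| ≤ K) => ?_))
    rw [Real.norm_eq_abs, abs_mul, abs_pow, abs_abs, mul_assoc, ← sq_abs (ζ ω)]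
    gcongr
    calc |ζ ω| ^ 3 = |ζ ω| * |ζ ω| ^ 2 := by ring
      _ ≤ K * |ζ ω| ^ 2 := by gcongr
  calc |∫ ω, R ω ∂μ| ≤ ∫ ω, |R ω| ∂μ := abs_integral_le_integral_abs
    _ = (∫ ω in {ω | K < |ζ ω|}, |R ω| ∂μ) + ∫ ω in {ω | |ζ ω| ≤ K}, |R ω| ∂μ := by
        rw [← hSc, integral_add_compl hS hRi.abs]
    _ ≤ (∫ ω in {ω | K < |ζ ω|}, A * ζ ω ^ 2 ∂μ) + ∫ ω in {ω | |ζ ω| ≤ K}, B * |ζ ω| ^ 3 ∂μ :=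
        add_le_add
          (setIntegral_mono_on hRi.abs.integrableOn (hsq.const_mul A).integrableOn hS
            fun ω _ => (hb ω).trans (min_le_left _ _))
          (setIntegral_mono_on hRi.abs.integrableOn hcube (hSc ▸ hS.compl)
            fun ω _ => (hb ω).trans (min_le_right _ _))
    _ = _ := by rw [integral_const_mul, integral_const_mul]


theorem abs_integral_sub_taylor_le [IsProbabilityMeasure μ] {V V0 a1 a2 ζ : Ω → ℝ}
    {C1 C2 M2 M3 : ℝ} (K : ℝ)
    (hζ : Measurable ζ) (hζ2 : MemLp ζ 2 μ) (hV : AEStronglyMeasurable V μ)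
    (hV0 : Integrable V0 μ) (ha1 : Measurable a1) (ha1b : ∀ ω, |a1 ω| ≤ C1)
    (hi1 : IndepFun a1 ζ μ) (ha2 : Measurable a2) (ha2b : ∀ ω, |a2 ω| ≤ C2)
    (hi2 : IndepFun a2 ζ μ)
    (hR : ∀ ω, |V ω - V0 ω - a1 ω * ζ ω - a2 ω * ζ ω ^ 2 / 2|
      ≤ min (M2 * ζ ω ^ 2) (M3 * |ζ ω| ^ 3)) :
    |∫ ω, V ω ∂μ - ((∫ ω, V0 ω ∂μ) + (∫ ω, a1 ω ∂μ) * (∫ ω, ζ ω ∂μ)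
        + (∫ ω, a2 ω ∂μ) * (∫ ω, ζ ω ^ 2 ∂μ) / 2)|
      ≤ M2 * (∫ ω in {ω | K < |ζ ω|}, ζ ω ^ 2 ∂μ)
        + M3 * ∫ ω in {ω | |ζ ω| ≤ K}, |ζ ω| ^ 3 ∂μ := by
  have hsq : Integrable (fun ω => ζ ω ^ 2) μ := hζ2.integrable_sq
  have h1 : Integrable (fun ω => a1 ω * ζ ω) μ :=
    (hζ2.integrable one_le_two).bdd_mul ha1.aestronglyMeasurable (ae_of_all _ ha1b)
  have h2 : Integrable (fun ω => a2 ω * ζ ω ^ 2 / 2) μ :=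
    (hsq.bdd_mul ha2.aestronglyMeasurable (ae_of_all _ ha2b)).div_const 2
  have hRm : AEStronglyMeasurable (fun ω => V ω - V0 ω - a1 ω * ζ ω - a2 ω * ζ ω ^ 2 / 2) μ :=
    ((hV.sub hV0.1).sub h1.1).sub h2.1
  have hRi : Integrable (fun ω => V ω - V0 ω - a1 ω * ζ ω - a2 ω * ζ ω ^ 2 / 2) μ :=
    (hsq.const_mul M2).mono' hRm (ae_of_all _ fun ω => (hR ω).trans (min_le_left _ _))
  have hVi : Integrable V μ :=
    (((hRi.add h2).add h1).add hV0).congr (ae_of_all _ fun ω => by simp only [Pi.add_apply]; ring)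
  have e1 : ∫ ω, a1 ω * ζ ω ∂μ = (∫ ω, a1 ω ∂μ) * ∫ ω, ζ ω ∂μ :=
    hi1.integral_mul_eq_mul_integral ha1.aestronglyMeasurable hζ.aestronglyMeasurable
  have e2 : ∫ ω, a2 ω * ζ ω ^ 2 ∂μ = (∫ ω, a2 ω ∂μ) * ∫ ω, ζ ω ^ 2 ∂μ :=
    (hi2.comp measurable_id (measurable_id.pow_const 2)).integral_mul_eq_mul_integral
      ha2.aestronglyMeasurable (hζ.pow_const 2).aestronglyMeasurable
  have hRint : ∫ ω, (V ω - V0 ω - a1 ω * ζ ω - a2 ω * ζ ω ^ 2 / 2) ∂μ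
      = ∫ ω, V ω ∂μ - ((∫ ω, V0 ω ∂μ) + (∫ ω, a1 ω ∂μ) * (∫ ω, ζ ω ∂μ)
        + (∫ ω, a2 ω ∂μ) * (∫ ω, ζ ω ^ 2 ∂μ) / 2) := by
    have i1 : Integrable (fun ω => V ω - V0 ω) μ := hVi.sub hV0
    have i2 : Integrable (fun ω => V ω - V0 ω - a1 ω * ζ ω) μ := i1.sub h1
    rw [integral_sub i2 h2, integral_sub i1 h1, integral_sub hVi hV0, integral_div, e1, e2]
    ring
  rw [← hRint]
  exact abs_integral_le_of_abs_le_min K hζ hζ2 hRm hR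

end Expansion

section Coordinate

variable {Ω : Type*} {n : ℕ} {I : Set ℝ} {f : (Fin n → ℝ) → ℝ} {g : ℝ → ℝ} {B1 B2 B3 : ℝ}

theorem measurable_comp_slice {m : MeasurableSpace Ω} (hIopen : IsOpen I)
    (hIconn : I.OrdConnected) (hf : CoordDiff3 n I f) (hbdd2 : BddAbove (lamSet n I f 2))
    (hg : Continuous g) {W : Ω → Fin n → ℝ} (hW : Measurable W) (hWI : ∀ ω j, W ω j ∈ I)
    (i : Fin n) {ζ : Ω → ℝ} (hζ : Measurable ζ) (hζI : ∀ ω, ζ ω ∈ I) :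
    Measurable fun ω => g (slice f (W ω) i (ζ ω)) :=
  (hg.comp_continuousOn (continuousOn_of_mem_box hIopen hIconn hf hbdd2)).measurable_comp
    (measurable_update'.comp (hW.prodMk hζ))
    fun ω => Set.mem_univ_pi.2 (update_mem_box (hWI ω) i (hζI ω))

theorem measurable_compDeriv1_slice {m : MeasurableSpace Ω} (hIopen : IsOpen I)
    (hIconn : I.OrdConnected) (hf : CoordDiff3 n I f) (hbdd2 : BddAbove (lamSet n I f 2))
    (hg : ∀ p < 3, Differentiable ℝ (iteratedDeriv p g)) {W : Ω → Fin n → ℝ}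
    (hW : Measurable W) (hWI : ∀ ω j, W ω j ∈ I) (i : Fin n) {t : ℝ} (ht : t ∈ I) :
    Measurable fun ω => compDeriv1 g (slice f (W ω) i) t := by
  refine measurable_of_hasDerivAt (F := fun ω s => g (slice f (W ω) i s)) ?_
    fun ω => (hasDerivAt_comp_compDeriv hg (hf.differentiableAt_slice hIopen (hWI ω) i ht)).1
  filter_upwards [hIopen.mem_nhds ht] with s hs
  exact measurable_comp_slice hIopen hIconn hf hbdd2
    (by simpa using (hg 0 (by norm_num)).continuous) hW hWI i measurable_const fun _ => hs

theorem measurable_compDeriv2_slice {m : MeasurableSpace Ω} (hIopen : IsOpen I)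
    (hIconn : I.OrdConnected) (hf : CoordDiff3 n I f) (hbdd2 : BddAbove (lamSet n I f 2))
    (hg : ∀ p < 3, Differentiable ℝ (iteratedDeriv p g)) {W : Ω → Fin n → ℝ}
    (hW : Measurable W) (hWI : ∀ ω j, W ω j ∈ I) (i : Fin n) {t : ℝ} (ht : t ∈ I) :
    Measurable fun ω => compDeriv2 g (slice f (W ω) i) t := by
  refine measurable_of_hasDerivAt (F := fun ω s => compDeriv1 g (slice f (W ω) i) s) ?_
    fun ω => (hasDerivAt_comp_compDeriv hg (hf.differentiableAt_slice hIopen (hWI ω) i ht)).2.1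
  filter_upwards [hIopen.mem_nhds ht] with s hs
  exact measurable_compDeriv1_slice hIopen hIconn hf hbdd2 hg hW hWI i hs

end Coordinate

section Coordinate2

variable {Ω : Type*} {mΩ : MeasurableSpace Ω} {μ : Measure Ω} {n : ℕ} {I : Set ℝ}
  {f : (Fin n → ℝ) → ℝ} {g : ℝ → ℝ} {B1 B2 B3 : ℝ}

theorem integrable_comp_of_mem_box [IsFiniteMeasure μ] (hIopen : IsOpen I)
    (hIconn : I.OrdConnected) (hI0 : (0 : ℝ) ∈ I) (hf : CoordDiff3 n I f)
    (hbdd2 : BddAbove (lamSet n I f 2)) (hg : Differentiable ℝ g) (hB1 : ∀ y, |deriv g y| ≤ B1)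
    {V : Ω → Fin n → ℝ} (hV : Measurable V) (hVI : ∀ ω j, V ω j ∈ I)
    (hVint : ∀ j, Integrable (fun ω => V ω j) μ) :
    Integrable (fun ω => g (f (V ω))) μ := by
  refine ((integrable_const |g (f 0)|).add
    ((integrable_finsetSum Finset.univ fun j _ => (hVint j).abs).const_mul
      (B1 * √(lam n I f 2)))).mono'
    ((hg.continuous.comp_continuousOn
      (continuousOn_of_mem_box hIopen hIconn hf hbdd2)).measurable_comp
        hV fun ω => Set.mem_univ_pi.2 (hVI ω)).aestronglyMeasurable
    (ae_of_all _ fun ω => ?_)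
  have hg' : |g (f (V ω)) - g (f 0)| ≤ B1 * |f (V ω) - f 0| :=
    convex_univ.norm_image_sub_le_of_norm_deriv_le (fun y _ => hg y) (fun y _ => hB1 y)
      trivial trivial
  have hf' : |f (V ω) - f 0| ≤ √(lam n I f 2) * ∑ j, |V ω j| := by
    simpa using abs_sub_le_of_mem_box hIopen hIconn hf hbdd2 (y := 0) (hVI ω) fun _ => hI0
  have hB1' : 0 ≤ B1 := (abs_nonneg _).trans (hB1 0)
  rw [Real.norm_eq_abs]
  calc |g (f (V ω))| ≤ |g (f 0)| + |g (f (V ω)) - g (f 0)| := by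
        linarith [abs_sub_abs_le_abs_sub (g (f (V ω))) (g (f 0))]
    _ ≤ |g (f 0)| + B1 * (√(lam n I f 2) * ∑ j, |V ω j|) := by gcongr; exact hg'.trans (by gcongr)
    _ = _ := by simp only [Pi.add_apply]; ring

end Coordinate2

section Coordinate3

variable {Ω : Type*} {mΩ : MeasurableSpace Ω} {μ : Measure Ω} [IsProbabilityMeasure μ] {n : ℕ}
  {I : Set ℝ} {f : (Fin n → ℝ) → ℝ} {g : ℝ → ℝ} {B1 B2 B3 : ℝ}

theorem abs_integral_comp_slice_sub_taylor_le (hIopen : IsOpen I) (hIconn : I.OrdConnected)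
    (hI0 : (0 : ℝ) ∈ I) (hf : CoordDiff3 n I f) (hbdd2 : BddAbove (lamSet n I f 2))
    (hbdd3 : BddAbove (lamSet n I f 3)) (hg : ∀ p < 3, Differentiable ℝ (iteratedDeriv p g))
    (hB1 : ∀ y, |deriv g y| ≤ B1) (hB2 : ∀ y, |iteratedDeriv 2 g y| ≤ B2)
    (hB3 : ∀ y, |iteratedDeriv 3 g y| ≤ B3) (K : ℝ) {W : Ω → Fin n → ℝ} (hW : Measurable W)
    (hWI : ∀ ω j, W ω j ∈ I) (hWint : ∀ j, Integrable (fun ω => W ω j) μ) (i : Fin n)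
    {ζ : Ω → ℝ} (hζ : Measurable ζ) (hζI : ∀ ω, ζ ω ∈ I) (hζ2 : MemLp ζ 2 μ)
    (hWζ : IndepFun W ζ μ) :
    |∫ ω, g (slice f (W ω) i (ζ ω)) ∂μ - ((∫ ω, g (slice f (W ω) i 0) ∂μ)
        + (∫ ω, compDeriv1 g (slice f (W ω) i) 0 ∂μ) * (∫ ω, ζ ω ∂μ)
        + (∫ ω, compDeriv2 g (slice f (W ω) i) 0 ∂μ) * (∫ ω, ζ ω ^ 2 ∂μ) / 2)|
      ≤ (B1 + B2) * lam n I f 2 * (∫ ω in {ω | K < |ζ ω|}, ζ ω ^ 2 ∂μ)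
        + (B1 + 3 * B2 + B3) * lam n I f 3 / 6 * ∫ ω in {ω | |ζ ω| ≤ K}, |ζ ω| ^ 3 ∂μ := by
  have hg0 : Differentiable ℝ g := by simpa using hg 0 (by norm_num)
  have hm1 := measurable_compDeriv1_slice hIopen hIconn hf hbdd2 hg (comap_measurable W) hWI i hI0
  have hm2 := measurable_compDeriv2_slice hIopen hIconn hf hbdd2 hg (comap_measurable W) hWI i hI0
  have hV0 : Integrable (fun ω => g (slice f (W ω) i 0)) μ := by
    refine integrable_comp_of_mem_box hIopen hIconn hI0 hf hbdd2 hg0 hB1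
      (measurable_update'.comp (hW.prodMk measurable_const))
      (fun ω => update_mem_box (hWI ω) i hI0) fun j => ?_
    rcases eq_or_ne j i with rfl | h
    · simp
    · simpa [Function.update_of_ne h] using hWint j
  exact abs_integral_sub_taylor_le K hζ hζ2
    (measurable_comp_slice hIopen hIconn hf hbdd2 hg0.continuous hW hWI i hζ
      hζI).aestronglyMeasurable
    hV0 (hm1.mono hW.comap_le le_rfl) (fun ω => abs_compDeriv1_slice_le hbdd2 hB1 (hWI ω) hI0)
    (hWζ.of_measurable_comap_left hm1) (hm2.mono hW.comap_le le_rfl)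
    (fun ω => abs_compDeriv2_slice_le hbdd2 hB1 hB2 (hWI ω) hI0) (hWζ.of_measurable_comap_left hm2)
    fun ω => abs_comp_slice_taylor_le hIopen hIconn hI0 hf hbdd2 hbdd3 hg hB1 hB2 hB3 (hWI ω)
      (hζI ω)

theorem abs_integral_comp_slice_sub_le (hIopen : IsOpen I) (hIconn : I.OrdConnected)
    (hI0 : (0 : ℝ) ∈ I) (hf : CoordDiff3 n I f) (hbdd2 : BddAbove (lamSet n I f 2))
    (hbdd3 : BddAbove (lamSet n I f 3)) (hg : ∀ p < 3, Differentiable ℝ (iteratedDeriv p g))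
    (hB1 : ∀ y, |deriv g y| ≤ B1) (hB2 : ∀ y, |iteratedDeriv 2 g y| ≤ B2)
    (hB3 : ∀ y, |iteratedDeriv 3 g y| ≤ B3) (K : ℝ) {W : Ω → Fin n → ℝ} (hW : Measurable W)
    (hWI : ∀ ω j, W ω j ∈ I) (hWint : ∀ j, Integrable (fun ω => W ω j) μ) (i : Fin n)
    {ξ η : Ω → ℝ} (hξ : Measurable ξ) (hη : Measurable η) (hξI : ∀ ω, ξ ω ∈ I)
    (hηI : ∀ ω, η ω ∈ I) (hξ2 : MemLp ξ 2 μ) (hη2 : MemLp η 2 μ) (hWξ : IndepFun W ξ μ)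
    (hWη : IndepFun W η μ) (hmean : ∫ ω, ξ ω ∂μ = ∫ ω, η ω ∂μ)
    (hvar : ∫ ω, ξ ω ^ 2 ∂μ = ∫ ω, η ω ^ 2 ∂μ) :
    |∫ ω, g (slice f (W ω) i (ξ ω)) ∂μ - ∫ ω, g (slice f (W ω) i (η ω)) ∂μ|
      ≤ (B1 + B2) * lam n I f 2 * ((∫ ω in {ω | K < |ξ ω|}, ξ ω ^ 2 ∂μ)
          + ∫ ω in {ω | K < |η ω|}, η ω ^ 2 ∂μ)
        + (B1 + 3 * B2 + B3) * lam n I f 3 / 6 * ((∫ ω in {ω | |ξ ω| ≤ K}, |ξ ω| ^ 3 ∂μ)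
          + ∫ ω in {ω | |η ω| ≤ K}, |η ω| ^ 3 ∂μ) := by
  have hξ' := abs_integral_comp_slice_sub_taylor_le hIopen hIconn hI0 hf hbdd2 hbdd3 hg hB1 hB2
    hB3 K hW hWI hWint i hξ hξI hξ2 hWξ
  have hη' := abs_integral_comp_slice_sub_taylor_le hIopen hIconn hI0 hf hbdd2 hbdd3 hg hB1 hB2
    hB3 K hW hWI hWint i hη hηI hη2 hWη
  rw [hmean, hvar] at hξ'
  rw [abs_sub_comm] at hη'
  exact (abs_sub_le _ _ _).trans ((add_le_add hξ' hη').trans_eq (by ring))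

end Coordinate3

theorem indepFun_update_hybrid {Ω : Type*} {mΩ : MeasurableSpace Ω} {μ : Measure Ω} {n : ℕ}
    {X Y : Fin n → Ω → ℝ} (hX : ∀ i, Measurable (X i)) (hY : ∀ i, Measurable (Y i))
    (hXY : iIndepFun (Sum.elim X Y) μ) (i : Fin n) :
    IndepFun (fun ω j => Function.update (hybrid X Y i) i 0 j ω) (X i) μ ∧
      IndepFun (fun ω j => Function.update (hybrid X Y i) i 0 j ω) (Y i) μ := by
  set S : Set (Fin n ⊕ Fin n) := {s | s ≠ .inl i ∧ s ≠ .inr i}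
  have hZ : ∀ s, Measurable (Sum.elim X Y s) := by rintro (j | j); exacts [hX j, hY j]
  set mS := ⨆ s ∈ S, MeasurableSpace.comap (Sum.elim X Y s) inferInstance
  have hW : Measurable[mS] fun ω j => Function.update (hybrid X Y i) i 0 j ω := by
    refine (@measurable_pi_iff Ω (Fin n) (fun _ => ℝ) mS _ _).2 fun j => ?_
    rcases eq_or_ne j i with rfl | h
    · simp only [Function.update_self, Pi.zero_apply]
      exact measurable_const
    set s : Fin n ⊕ Fin n := if (j : ℕ) < i then .inr j else .inl j
    have hs : s ∈ S := by simp only [S, s]; split_ifs <;> simp [h]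
    have hWj : (fun ω => Function.update (hybrid X Y i) i 0 j ω) = Sum.elim X Y s := by
      simp only [Function.update_of_ne h, hybrid, s]; split_ifs <;> rfl
    rw [hWj]
    exact (comap_measurable _).mono
      (le_iSup₂ (f := fun s (_ : s ∈ S) => MeasurableSpace.comap (Sum.elim X Y s) inferInstance)
        s hs) le_rfl
  exact ⟨hXY.indepFun_of_measurable_iSup hZ (k := .inl i) (by simp [S]) hW,
    hXY.indepFun_of_measurable_iSup hZ (k := .inr i) (by simp [S]) hW⟩

theorem stmt0_general
    {Ω : Type} [MeasurableSpace Ω] {μ : Measure Ω} [IsProbabilityMeasure μ]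
    {n : ℕ} {I : Set ℝ} (hIopen : IsOpen I) (hIconn : I.OrdConnected)
    (hI0 : (0 : ℝ) ∈ I)
    (X Y : Fin n → Ω → ℝ)
    (hXmeas : ∀ i, Measurable (X i)) (hYmeas : ∀ i, Measurable (Y i))
    (hXI : ∀ i ω, X i ω ∈ I) (hYI : ∀ i ω, Y i ω ∈ I)
    (hindep : iIndepFun (Sum.elim X Y) μ)
    (hX2 : ∀ i, MemLp (X i) 2 μ) (hY2 : ∀ i, MemLp (Y i) 2 μ)
    (hmean : ∀ i, ∫ ω, X i ω ∂μ = ∫ ω, Y i ω ∂μ)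
    (hvar : ∀ i, ∫ ω, (X i ω) ^ 2 ∂μ = ∫ ω, (Y i ω) ^ 2 ∂μ)
    (f : (Fin n → ℝ) → ℝ) (hf : CoordDiff3 n I f)
    (hbdd2 : BddAbove (lamSet n I f 2)) (hbdd3 : BddAbove (lamSet n I f 3))
    (g : ℝ → ℝ) (hg : ∀ p < 3, Differentiable ℝ (iteratedDeriv p g))
    (B1 B2 B3 : ℝ)
    (hB1 : ∀ t, |deriv g t| ≤ B1)
    (hB2 : ∀ t, |iteratedDeriv 2 g t| ≤ B2)
    (hB3 : ∀ t, |iteratedDeriv 3 g t| ≤ B3)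
    (K : ℝ) :
    |(∫ ω, g (f fun i => X i ω) ∂μ) - ∫ ω, g (f fun i => Y i ω) ∂μ| ≤
      (B1 + B2) * lam n I f 2 *
        (∑ i, ((∫ ω in {ω | K < |X i ω|}, (X i ω) ^ 2 ∂μ) +
          ∫ ω in {ω | K < |Y i ω|}, (Y i ω) ^ 2 ∂μ)) +
      (B1 / 6 + B2 / 2 + B3 / 6) * lam n I f 3 *
        (∑ i, ((∫ ω in {ω | |X i ω| ≤ K}, |X i ω| ^ 3 ∂μ) +
          ∫ ω in {ω | |Y i ω| ≤ K}, |Y i ω| ^ 3 ∂μ)) := by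
  set W : Fin n → Ω → Fin n → ℝ := fun i ω j => Function.update (hybrid X Y i) i 0 j ω
  have hW : ∀ (i : Fin n) (ζ : Ω → ℝ) ω,
      (fun j => Function.update (hybrid X Y i) i ζ j ω) = Function.update (W i ω) i (ζ ω) := by
    intro i ζ ω; funext j
    rcases eq_or_ne j i with rfl | h <;> simp [W, Function.update_of_ne, *]
  have hWI : ∀ i ω j, W i ω j ∈ I := fun i ω =>
    update_hybrid_apply_of_forall (P := fun v : Ω → ℝ => v ω ∈ I) hI0 (hXI · ω) (hYI · ω) i
  have hWm : ∀ i, Measurable (W i) := fun i => measurable_pi_iff.2 <|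
    update_hybrid_apply_of_forall (P := Measurable) measurable_const hXmeas hYmeas i
  have hWint : ∀ i j, Integrable (fun ω => W i ω j) μ := fun i =>
    update_hybrid_apply_of_forall (P := (Integrable · μ)) (integrable_zero _ _ _)
      (fun j => (hX2 j).integrable one_le_two) (fun j => (hY2 j).integrable one_le_two) i
  have hstep := fun i => abs_integral_comp_slice_sub_le hIopen hIconn hI0 hf hbdd2 hbdd3 hg
    hB1 hB2 hB3 K (hWm i) (hWI i) (hWint i) i (hXmeas i) (hYmeas i) (hXI i) (hYI i)
    (hX2 i) (hY2 i) (indepFun_update_hybrid hXmeas hYmeas hindep i).1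
    (indepFun_update_hybrid hXmeas hYmeas hindep i).2 (hmean i) (hvar i)
  rw [sub_eq_sum_hybrid (fun V : Fin n → Ω → ℝ => ∫ ω, g (f fun j => V j ω) ∂μ) X Y]
  simp only [hW]
  refine (Finset.abs_sum_le_sum_abs _ _).trans ((Finset.sum_le_sum fun i _ => hstep i).trans_eq ?_)
  rw [Finset.mul_sum, Finset.mul_sum, ← Finset.sum_add_distrib]
  exact Finset.sum_congr rfl fun i _ => by ring

theorem stmt0
    {Ω : Type} [MeasurableSpace Ω] {μ : Measure Ω} [IsProbabilityMeasure μ]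
    {n : ℕ} {I : Set ℝ} (hIopen : IsOpen I) (hIconn : I.OrdConnected)
    (hI0 : (0 : ℝ) ∈ I)
    (X Y : Fin n → Ω → ℝ)
    (hXmeas : ∀ i, Measurable (X i)) (hYmeas : ∀ i, Measurable (Y i))
    (hXI : ∀ i ω, X i ω ∈ I) (hYI : ∀ i ω, Y i ω ∈ I)
    (hindep : iIndepFun (Sum.elim X Y) μ)
    (hX2 : ∀ i, MemLp (X i) 2 μ) (hY2 : ∀ i, MemLp (Y i) 2 μ)
    (hmean : ∀ i, ∫ ω, X i ω ∂μ = ∫ ω, Y i ω ∂μ)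
    (hvar : ∀ i, ∫ ω, (X i ω) ^ 2 ∂μ = ∫ ω, (Y i ω) ^ 2 ∂μ)
    (f : (Fin n → ℝ) → ℝ) (hf : CoordDiff3 n I f)
    (hbdd2 : BddAbove (lamSet n I f 2)) (hbdd3 : BddAbove (lamSet n I f 3))
    (g : ℝ → ℝ) (hg : ∀ p < 3, Differentiable ℝ (iteratedDeriv p g))
    (B1 B2 B3 : ℝ)
    (hB1 : ∀ t, |deriv g t| ≤ B1)
    (hB2 : ∀ t, |iteratedDeriv 2 g t| ≤ B2)
    (hB3 : ∀ t, |iteratedDeriv 3 g t| ≤ B3)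
    (K : ℝ) (hK : 0 < K) :
    |(∫ ω, g (f fun i => X i ω) ∂μ) - ∫ ω, g (f fun i => Y i ω) ∂μ| ≤
      (B1 + B2) * lam n I f 2 *
        (∑ i, ((∫ ω in {ω | K < |X i ω|}, (X i ω) ^ 2 ∂μ) +
          ∫ ω in {ω | K < |Y i ω|}, (Y i ω) ^ 2 ∂μ)) +
      (B1 / 6 + B2 / 2 + B3 / 6) * lam n I f 3 *
        (∑ i, ((∫ ω in {ω | |X i ω| ≤ K}, |X i ω| ^ 3 ∂μ) +
          ∫ ω in {ω | |Y i ω| ≤ K}, |Y i ω| ^ 3 ∂μ)) :=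
  stmt0_general hIopen hIconn hI0 X Y hXmeas hYmeas hXI hYI hindep hX2 hY2 hmean hvar f hf hbdd2
    hbdd3 g hg B1 B2 B3 hB1 hB2 hB3 K
end

section
/- Let I be an open interval containing 0, let 𝔉 be a finite nonempty collection of functions from Iⁿ to ℝ, each thrice differentiable in each coordinate with uniformly bounded first, second and third coordinate partial derivatives, and let α ≥ 1. Define F : Iⁿ → ℝ by F(x) := α⁻¹ log( Σ_{f∈𝔉} e^{α f(x)} ). Then λ₂(F) ≤ 3 α λ₂(𝔉) and λ₃(F) ≤ 13 α² λ₃(𝔉). -/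
open MeasureTheory ProbabilityTheory

/-- The set whose supremum is `λ_r(𝔉)` for a family `𝔉 = (f k)`. -/
def lamFamSet (n : ℕ) (I : Set ℝ) {κ : Type} (f : κ → (Fin n → ℝ) → ℝ)
    (r : ℕ) : Set ℝ :=
  ⋃ k, lamSet n I (f k) r

/-- `λ_r(𝔉) = sup_{f ∈ 𝔉} λ_r(f)`. -/
noncomputable def lamFam (n : ℕ) (I : Set ℝ) {κ : Type}
    (f : κ → (Fin n → ℝ) → ℝ) (r : ℕ) : ℝ :=
  sSup (lamFamSet n I f r)


open Function

/-!
Along a coordinate line, `F = α⁻¹ log S` with `S = ∑ₖ exp uₖ` and `uₖ = α fₖ`. Writing `⟨·⟩` for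
the average against the softmax weights `exp uₖ / S`, the moments `S⁽ʲ⁾ / S` are `⟨u'⟩`,
`⟨u'' + u'²⟩` and `⟨u''' + 3u''u' + u'³⟩`, and the derivatives of `log S` are the cumulants built
from them: `m₁`, `m₂ - m₁²` and `m₃ - 3m₁m₂ + 2m₁³`. An average is bounded by the largest absolute
value, so bounds `Mₚ` on the `p`-th partials of the `fₖ` give `|∂F| ≤ M₁`,
`|∂²F| ≤ M₂ + 2αM₁²` and `|∂³F| ≤ M₃ + 6αM₂M₁ + 6α²M₁³`. With `Mₚ = ℓᵖ`, where `ℓʳ = λᵣ(𝔉)`, the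
constants become `1 + 2α ≤ 3α` for `r = 2` and `1 + 6α + 6α² ≤ 13α²`, `(1 + 2α)³ ≤ (13α²)²` for
`r = 3`.
-/

theorem eqOn_iteratedDeriv_succ_of_hasDerivAt {𝕜 E : Type*} [NontriviallyNormedField 𝕜]
    [NormedAddCommGroup E] [NormedSpace 𝕜 E] {U : Set 𝕜} (hU : IsOpen U) {m : ℕ}
    {f g g' : 𝕜 → E} (hfg : Set.EqOn (iteratedDeriv m f) g U)
    (hg : ∀ t ∈ U, HasDerivAt g (g' t) t) : Set.EqOn (iteratedDeriv (m + 1) f) g' U := by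
  intro t ht
  rw [iteratedDeriv_succ, (hfg.eventuallyEq_of_mem (hU.mem_nhds ht)).deriv_eq]
  exact (hg t ht).deriv

structure HasDerivs3On (f f₁ f₂ f₃ : ℝ → ℝ) (U : Set ℝ) : Prop where
  hasDerivAt₀ : ∀ t ∈ U, HasDerivAt f (f₁ t) t
  hasDerivAt₁ : ∀ t ∈ U, HasDerivAt f₁ (f₂ t) t
  hasDerivAt₂ : ∀ t ∈ U, HasDerivAt f₂ (f₃ t) t

namespace HasDerivs3On

variable {U : Set ℝ} {f f₁ f₂ f₃ : ℝ → ℝ}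

theorem of_differentiableOn_iteratedDeriv (hU : IsOpen U)
    (hf : ∀ p < 3, DifferentiableOn ℝ (iteratedDeriv p f) U) :
    HasDerivs3On f (iteratedDeriv 1 f) (iteratedDeriv 2 f) (iteratedDeriv 3 f) U := by
  have h : ∀ p < 3, ∀ t ∈ U, HasDerivAt (iteratedDeriv p f) (iteratedDeriv (p + 1) f t) t := by
    intro p hp t ht
    rw [iteratedDeriv_succ]
    exact ((hf p hp).differentiableAt (hU.mem_nhds ht)).hasDerivAt
  exact ⟨by simpa using h 0 (by norm_num), h 1 (by norm_num), h 2 (by norm_num)⟩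

theorem eqOn_iteratedDeriv_one (h : HasDerivs3On f f₁ f₂ f₃ U) (hU : IsOpen U) :
    Set.EqOn (iteratedDeriv 1 f) f₁ U :=
  eqOn_iteratedDeriv_succ_of_hasDerivAt hU (fun t _ => by rw [iteratedDeriv_zero]) h.hasDerivAt₀

theorem eqOn_iteratedDeriv_two (h : HasDerivs3On f f₁ f₂ f₃ U) (hU : IsOpen U) :
    Set.EqOn (iteratedDeriv 2 f) f₂ U :=
  eqOn_iteratedDeriv_succ_of_hasDerivAt hU (h.eqOn_iteratedDeriv_one hU) h.hasDerivAt₁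

theorem eqOn_iteratedDeriv_three (h : HasDerivs3On f f₁ f₂ f₃ U) (hU : IsOpen U) :
    Set.EqOn (iteratedDeriv 3 f) f₃ U :=
  eqOn_iteratedDeriv_succ_of_hasDerivAt hU (h.eqOn_iteratedDeriv_two hU) h.hasDerivAt₂

theorem const_mul (h : HasDerivs3On f f₁ f₂ f₃ U) (c : ℝ) :
    HasDerivs3On (fun t => c * f t) (fun t => c * f₁ t) (fun t => c * f₂ t)
      (fun t => c * f₃ t) U :=
  ⟨fun t ht => (h.hasDerivAt₀ t ht).const_mul c, fun t ht => (h.hasDerivAt₁ t ht).const_mul c,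
    fun t ht => (h.hasDerivAt₂ t ht).const_mul c⟩

theorem sum {ι : Type*} (s : Finset ι) {f f₁ f₂ f₃ : ι → ℝ → ℝ}
    (h : ∀ i ∈ s, HasDerivs3On (f i) (f₁ i) (f₂ i) (f₃ i) U) :
    HasDerivs3On (fun t => ∑ i ∈ s, f i t) (fun t => ∑ i ∈ s, f₁ i t)
      (fun t => ∑ i ∈ s, f₂ i t) (fun t => ∑ i ∈ s, f₃ i t) U :=
  ⟨fun t ht => HasDerivAt.fun_sum fun i hi => (h i hi).hasDerivAt₀ t ht,
    fun t ht => HasDerivAt.fun_sum fun i hi => (h i hi).hasDerivAt₁ t ht,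
    fun t ht => HasDerivAt.fun_sum fun i hi => (h i hi).hasDerivAt₂ t ht⟩

theorem exp (h : HasDerivs3On f f₁ f₂ f₃ U) :
    HasDerivs3On (fun t => Real.exp (f t)) (fun t => f₁ t * Real.exp (f t))
      (fun t => (f₂ t + f₁ t ^ 2) * Real.exp (f t))
      (fun t => (f₃ t + 3 * f₂ t * f₁ t + f₁ t ^ 3) * Real.exp (f t)) U := by
  refine ⟨fun t ht => ?_, fun t ht => ?_, fun t ht => ?_⟩
  · simpa only [mul_comm] using (h.hasDerivAt₀ t ht).exp
  · exact ((h.hasDerivAt₁ t ht).fun_mul (h.hasDerivAt₀ t ht).exp).congr_deriv (by ring)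
  · have hsq := (h.hasDerivAt₂ t ht).fun_add ((h.hasDerivAt₁ t ht).fun_pow 2)
    exact (hsq.fun_mul (h.hasDerivAt₀ t ht).exp).congr_deriv (by ring)

theorem log (h : HasDerivs3On f f₁ f₂ f₃ U) (hf : ∀ t ∈ U, f t ≠ 0) :
    HasDerivs3On (fun t => Real.log (f t)) (fun t => f₁ t / f t)
      (fun t => f₂ t / f t - (f₁ t / f t) ^ 2)
      (fun t => f₃ t / f t - 3 * (f₁ t / f t) * (f₂ t / f t) + 2 * (f₁ t / f t) ^ 3) U := by
  refine ⟨fun t ht => (h.hasDerivAt₀ t ht).log (hf t ht), fun t ht => ?_, fun t ht => ?_⟩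
  · exact ((h.hasDerivAt₁ t ht).fun_div (h.hasDerivAt₀ t ht) (hf t ht)).congr_deriv
      (by field_simp)
  · have hq₁ := (h.hasDerivAt₁ t ht).fun_div (h.hasDerivAt₀ t ht) (hf t ht)
    have hq₂ := (h.hasDerivAt₂ t ht).fun_div (h.hasDerivAt₀ t ht) (hf t ht)
    have hft := hf t ht
    exact (hq₂.fun_sub (hq₁.fun_pow 2)).congr_deriv (by norm_num; field_simp; ring)

end HasDerivs3On

theorem abs_sum_mul_div_sum_le {ι : Type*} {s : Finset ι} {w u : ι → ℝ} {c : ℝ}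
    (hw : ∀ i ∈ s, 0 ≤ w i) (hs : 0 < ∑ i ∈ s, w i) (hu : ∀ i ∈ s, |u i| ≤ c) :
    |(∑ i ∈ s, u i * w i) / ∑ i ∈ s, w i| ≤ c := by
  rw [abs_div, abs_of_pos hs, div_le_iff₀ hs, Finset.mul_sum]
  refine (Finset.abs_sum_le_sum_abs _ _).trans (Finset.sum_le_sum fun i hi => ?_)
  rw [abs_mul, abs_of_nonneg (hw i hi)]
  exact mul_le_mul_of_nonneg_right (hu i hi) (hw i hi)

section CumulantBounds

variable {x₁ x₂ x₃ a₁ a₂ a₃ : ℝ}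

theorem abs_add_sq_le (h₁ : |x₁| ≤ a₁) (h₂ : |x₂| ≤ a₂) : |x₂ + x₁ ^ 2| ≤ a₂ + a₁ ^ 2 := by
  have : |x₁ ^ 2| ≤ a₁ ^ 2 := by rw [abs_pow]; exact pow_le_pow_left₀ (abs_nonneg _) h₁ 2
  exact (abs_add_le _ _).trans (add_le_add h₂ this)

theorem abs_add_mul_add_pow_three_le (h₁ : |x₁| ≤ a₁) (h₂ : |x₂| ≤ a₂) (h₃ : |x₃| ≤ a₃) :
    |x₃ + 3 * x₂ * x₁ + x₁ ^ 3| ≤ a₃ + 3 * a₂ * a₁ + a₁ ^ 3 := by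
  have h₂₁ : |3 * x₂ * x₁| ≤ 3 * a₂ * a₁ := by
    rw [abs_mul, abs_mul, abs_of_pos three_pos, mul_assoc, mul_assoc]
    gcongr
    exact (abs_nonneg _).trans h₂
  have h₁₃ : |x₁ ^ 3| ≤ a₁ ^ 3 := by rw [abs_pow]; exact pow_le_pow_left₀ (abs_nonneg _) h₁ 3
  exact (abs_add_three _ _ _).trans (add_le_add (add_le_add h₃ h₂₁) h₁₃)

theorem abs_sub_sq_le (h₁ : |x₁| ≤ a₁) (h₂ : |x₂| ≤ a₂ + a₁ ^ 2) :
    |x₂ - x₁ ^ 2| ≤ a₂ + 2 * a₁ ^ 2 := by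
  have : |x₁ ^ 2| ≤ a₁ ^ 2 := by rw [abs_pow]; exact pow_le_pow_left₀ (abs_nonneg _) h₁ 2
  linarith [abs_sub x₂ (x₁ ^ 2)]

theorem abs_sub_mul_add_pow_three_le (h₁ : |x₁| ≤ a₁) (h₂ : |x₂| ≤ a₂ + a₁ ^ 2)
    (h₃ : |x₃| ≤ a₃ + 3 * a₂ * a₁ + a₁ ^ 3) :
    |x₃ - 3 * x₁ * x₂ + 2 * x₁ ^ 3| ≤ a₃ + 6 * a₂ * a₁ + 6 * a₁ ^ 3 := by
  have h₁₂ : |x₁ * x₂| ≤ a₁ * (a₂ + a₁ ^ 2) := by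
    rw [abs_mul]; exact mul_le_mul h₁ h₂ (abs_nonneg _) ((abs_nonneg _).trans h₁)
  have h₁₃ : |x₁ ^ 3| ≤ a₁ ^ 3 := by rw [abs_pow]; exact pow_le_pow_left₀ (abs_nonneg _) h₁ 3
  calc |x₃ - 3 * x₁ * x₂ + 2 * x₁ ^ 3| = |x₃ + -(3 * (x₁ * x₂)) + 2 * x₁ ^ 3| := by
        congr 1; ring
    _ ≤ |x₃| + |-(3 * (x₁ * x₂))| + |2 * x₁ ^ 3| := abs_add_three _ _ _
    _ = |x₃| + 3 * |x₁ * x₂| + 2 * |x₁ ^ 3| := by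
        rw [abs_neg, abs_mul, abs_mul 2, abs_two, abs_of_pos (three_pos : (0 : ℝ) < 3)]
    _ ≤ a₃ + 6 * a₂ * a₁ + 6 * a₁ ^ 3 := by nlinarith

end CumulantBounds

section LogSumExp

variable {κ : Type*} [Fintype κ]

noncomputable def logSumExp {X : Type*} (u : κ → X → ℝ) (x : X) : ℝ :=
  Real.log (∑ k, Real.exp (u k x))

/-- For `α > 0` this lies between `max_k f k` and `max_k f k + log (card κ) / α`. -/
noncomputable def smoothMax {X : Type*} (α : ℝ) (f : κ → X → ℝ) (x : X) : ℝ :=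
  α⁻¹ * logSumExp (fun k y => α * f k y) x

noncomputable def softmaxMean (u φ : κ → ℝ → ℝ) (t : ℝ) : ℝ :=
  (∑ k, φ k t * Real.exp (u k t)) / ∑ k, Real.exp (u k t)

variable [Nonempty κ] {U : Set ℝ} {u u₁ u₂ u₃ : κ → ℝ → ℝ}

theorem abs_softmaxMean_le {φ : κ → ℝ → ℝ} {t c : ℝ} (h : ∀ k, |φ k t| ≤ c) :
    |softmaxMean u φ t| ≤ c :=
  abs_sum_mul_div_sum_le (fun _ _ => (Real.exp_pos _).le)
    (Finset.sum_pos (fun _ _ => Real.exp_pos _) Finset.univ_nonempty) fun k _ => h k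

theorem hasDerivs3On_logSumExp (hu : ∀ k, HasDerivs3On (u k) (u₁ k) (u₂ k) (u₃ k) U) :
    HasDerivs3On (logSumExp u) (softmaxMean u u₁)
      (fun t => softmaxMean u (fun k t => u₂ k t + u₁ k t ^ 2) t - softmaxMean u u₁ t ^ 2)
      (fun t => softmaxMean u (fun k t => u₃ k t + 3 * u₂ k t * u₁ k t + u₁ k t ^ 3) t
        - 3 * softmaxMean u u₁ t * softmaxMean u (fun k t => u₂ k t + u₁ k t ^ 2) t
        + 2 * softmaxMean u u₁ t ^ 3) U :=
  (HasDerivs3On.sum _ fun k _ => (hu k).exp).log fun _ _ =>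
    (Finset.sum_pos (fun _ _ => Real.exp_pos _) Finset.univ_nonempty).ne'

variable (hU : IsOpen U) (hu : ∀ k, HasDerivs3On (u k) (u₁ k) (u₂ k) (u₃ k) U)
  {A₁ A₂ A₃ : ℝ} (h₁ : ∀ k, ∀ t ∈ U, |u₁ k t| ≤ A₁) (h₂ : ∀ k, ∀ t ∈ U, |u₂ k t| ≤ A₂)
  (h₃ : ∀ k, ∀ t ∈ U, |u₃ k t| ≤ A₃) {t : ℝ} (ht : t ∈ U)
include hU hu h₁ ht

theorem abs_iteratedDeriv_one_logSumExp_le : |iteratedDeriv 1 (logSumExp u) t| ≤ A₁ := by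
  rw [(hasDerivs3On_logSumExp hu).eqOn_iteratedDeriv_one hU ht]
  exact abs_softmaxMean_le fun k => h₁ k t ht

include h₂ in
theorem abs_iteratedDeriv_two_logSumExp_le :
    |iteratedDeriv 2 (logSumExp u) t| ≤ A₂ + 2 * A₁ ^ 2 := by
  rw [(hasDerivs3On_logSumExp hu).eqOn_iteratedDeriv_two hU ht]
  exact abs_sub_sq_le (abs_softmaxMean_le fun k => h₁ k t ht)
    (abs_softmaxMean_le fun k => abs_add_sq_le (h₁ k t ht) (h₂ k t ht))

include h₂ h₃ in
theorem abs_iteratedDeriv_three_logSumExp_le :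
    |iteratedDeriv 3 (logSumExp u) t| ≤ A₃ + 6 * A₂ * A₁ + 6 * A₁ ^ 3 := by
  rw [(hasDerivs3On_logSumExp hu).eqOn_iteratedDeriv_three hU ht]
  exact abs_sub_mul_add_pow_three_le (abs_softmaxMean_le fun k => h₁ k t ht)
    (abs_softmaxMean_le fun k => abs_add_sq_le (h₁ k t ht) (h₂ k t ht))
    (abs_softmaxMean_le fun k =>
      abs_add_mul_add_pow_three_le (h₁ k t ht) (h₂ k t ht) (h₃ k t ht))

end LogSumExp

section Coordinates

variable {n : ℕ} {I : Set ℝ}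

theorem update_mem_of_forall_mem {x : Fin n → ℝ} (hx : ∀ j, x j ∈ I) {t : ℝ} (ht : t ∈ I)
    (i : Fin n) : ∀ j, update x i t j ∈ I := by
  intro j
  rcases eq_or_ne j i with rfl | hj
  · simpa using ht
  · simpa [hj] using hx j

theorem pderiv_update_self (f : (Fin n → ℝ) → ℝ) (i : Fin n) (p : ℕ) (x : Fin n → ℝ) (t : ℝ) :
    pderiv n f i p (update x i t) = iteratedDeriv p (fun s => f (update x i s)) t := by
  simp [pderiv]

theorem abs_const_mul_iteratedDeriv_slice_le {f : (Fin n → ℝ) → ℝ} {i : Fin n} {p : ℕ}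
    {α M : ℝ} (hα : 0 ≤ α) (h : ∀ y, (∀ j, y j ∈ I) → |pderiv n f i p y| ≤ M)
    {x : Fin n → ℝ} (hx : ∀ j, x j ∈ I) :
    ∀ t ∈ I, |α * iteratedDeriv p (fun s => f (update x i s)) t| ≤ α * M := by
  intro t ht
  rw [abs_mul, abs_of_nonneg hα, ← pderiv_update_self]
  exact mul_le_mul_of_nonneg_left (h _ (update_mem_of_forall_mem hx ht i)) hα

variable {κ : Type*} [Fintype κ]

theorem pderiv_smoothMax (α : ℝ) (f : κ → (Fin n → ℝ) → ℝ) (i : Fin n) (p : ℕ)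
    (x : Fin n → ℝ) : pderiv n (smoothMax α f) i p x =
      α⁻¹ * iteratedDeriv p (logSumExp fun k t => α * f k (update x i t)) (x i) := by
  rw [pderiv, ← iteratedDeriv_const_mul_field]
  rfl

variable [Nonempty κ] (hI : IsOpen I) {f : κ → (Fin n → ℝ) → ℝ}
  (hf : ∀ k, CoordDiff3 n I (f k)) {α : ℝ} (hα : 0 < α) {M₁ M₂ M₃ : ℝ}
  (h₁ : ∀ k i x, (∀ j, x j ∈ I) → |pderiv n (f k) i 1 x| ≤ M₁)
  (h₂ : ∀ k i x, (∀ j, x j ∈ I) → |pderiv n (f k) i 2 x| ≤ M₂)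
  (h₃ : ∀ k i x, (∀ j, x j ∈ I) → |pderiv n (f k) i 3 x| ≤ M₃)
  (i : Fin n) {x : Fin n → ℝ} (hx : ∀ j, x j ∈ I)
include hI hf hα h₁ hx

theorem abs_pderiv_one_smoothMax_le : |pderiv n (smoothMax α f) i 1 x| ≤ M₁ := by
  have hu := fun k => (HasDerivs3On.of_differentiableOn_iteratedDeriv hI (hf k i x hx)).const_mul α
  have h := abs_iteratedDeriv_one_logSumExp_le hI hu
    (fun k => abs_const_mul_iteratedDeriv_slice_le hα.le (h₁ k i) hx) (hx i)
  rw [pderiv_smoothMax, abs_mul, abs_inv, abs_of_pos hα, inv_mul_le_iff₀ hα]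
  exact h

include h₂ in
theorem abs_pderiv_two_smoothMax_le :
    |pderiv n (smoothMax α f) i 2 x| ≤ M₂ + 2 * α * M₁ ^ 2 := by
  have hu := fun k => (HasDerivs3On.of_differentiableOn_iteratedDeriv hI (hf k i x hx)).const_mul α
  have h := abs_iteratedDeriv_two_logSumExp_le hI hu
    (fun k => abs_const_mul_iteratedDeriv_slice_le hα.le (h₁ k i) hx)
    (fun k => abs_const_mul_iteratedDeriv_slice_le hα.le (h₂ k i) hx) (hx i)
  rw [pderiv_smoothMax, abs_mul, abs_inv, abs_of_pos hα, inv_mul_le_iff₀ hα]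
  linarith

include h₂ h₃ in
theorem abs_pderiv_three_smoothMax_le :
    |pderiv n (smoothMax α f) i 3 x| ≤ M₃ + 6 * α * M₂ * M₁ + 6 * α ^ 2 * M₁ ^ 3 := by
  have hu := fun k => (HasDerivs3On.of_differentiableOn_iteratedDeriv hI (hf k i x hx)).const_mul α
  have h := abs_iteratedDeriv_three_logSumExp_le hI hu
    (fun k => abs_const_mul_iteratedDeriv_slice_le hα.le (h₁ k i) hx)
    (fun k => abs_const_mul_iteratedDeriv_slice_le hα.le (h₂ k i) hx)
    (fun k => abs_const_mul_iteratedDeriv_slice_le hα.le (h₃ k i) hx) (hx i)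
  rw [pderiv_smoothMax, abs_mul, abs_inv, abs_of_pos hα, inv_mul_le_iff₀ hα]
  linarith

end Coordinates

section Lambda

variable {n : ℕ} {I : Set ℝ}

theorem Real.rpow_div_pow_cancel {a : ℝ} (ha : 0 ≤ a) (r : ℕ) {p : ℕ} (hp : p ≠ 0) :
    (a ^ ((r : ℝ) / p)) ^ p = a ^ r := by
  rw [← Real.rpow_mul_natCast ha, div_mul_cancel₀ _ (Nat.cast_ne_zero.2 hp), Real.rpow_natCast]

theorem lam_le_of_abs_pderiv_pow_le {F : (Fin n → ℝ) → ℝ} {r : ℕ} {C : ℝ} (hC : 0 ≤ C)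
    (h : ∀ i p x, 1 ≤ p → p ≤ r → (∀ j, x j ∈ I) → |pderiv n F i p x| ^ r ≤ C ^ p) :
    lam n I F r ≤ C := by
  refine Real.sSup_le ?_ hC
  rintro _ ⟨i, p, x, hp, hpr, hx, rfl⟩
  refine (pow_le_pow_iff_left₀ (by positivity) hC (by omega : p ≠ 0)).1 ?_
  rw [Real.rpow_div_pow_cancel (abs_nonneg _) r (by omega)]
  exact h i p x hp hpr hx

variable {κ : Type} (f : κ → (Fin n → ℝ) → ℝ)

theorem lamFam_nonneg (r : ℕ) : 0 ≤ lamFam n I f r :=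
  Real.sSup_nonneg fun y hy => by
    obtain ⟨k, i, p, x, -, -, -, rfl⟩ := Set.mem_iUnion.1 hy
    positivity

theorem exists_lamFam_eq_pow {r : ℕ} (hr : r ≠ 0) : ∃ ℓ, 0 ≤ ℓ ∧ lamFam n I f r = ℓ ^ r :=
  ⟨_, Real.rpow_nonneg (lamFam_nonneg f r) (r : ℝ)⁻¹,
    (Real.rpow_inv_natCast_pow (lamFam_nonneg f r) hr).symm⟩

variable {f}

theorem abs_pderiv_le_pow_of_lamFam_eq {r : ℕ} (hbdd : BddAbove (lamFamSet n I f r)) {ℓ : ℝ}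
    (hℓ : 0 ≤ ℓ) (hL : lamFam n I f r = ℓ ^ r) {p : ℕ} (hp : 1 ≤ p) (hpr : p ≤ r) :
    ∀ k i x, (∀ j, x j ∈ I) → |pderiv n (f k) i p x| ≤ ℓ ^ p := by
  intro k i x hx
  have hmem : |pderiv n (f k) i p x| ^ ((r : ℝ) / p) ∈ lamFamSet n I f r :=
    Set.mem_iUnion.2 ⟨k, i, p, x, hp, hpr, hx, rfl⟩
  have h := pow_le_pow_left₀ (by positivity) ((le_csSup hbdd hmem).trans_eq hL) p
  rw [Real.rpow_div_pow_cancel (abs_nonneg _) r (by omega), ← pow_mul, mul_comm, pow_mul] at h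
  exact (pow_le_pow_iff_left₀ (abs_nonneg _) (by positivity) (by omega)).1 h

variable [Fintype κ] [Nonempty κ] (hI : IsOpen I) (hf : ∀ k, CoordDiff3 n I (f k)) {α : ℝ}
  (hα : 1 ≤ α)
include hI hf hα

theorem lam_two_smoothMax_le (hbdd : BddAbove (lamFamSet n I f 2)) :
    lam n I (smoothMax α f) 2 ≤ 3 * α * lamFam n I f 2 := by
  obtain ⟨ℓ, hℓ, hL⟩ := exists_lamFam_eq_pow f two_ne_zero
  have hα₀ : 0 < α := by linarith
  have b₁ := abs_pderiv_le_pow_of_lamFam_eq hbdd hℓ hL le_rfl one_le_two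
  have b₂ := abs_pderiv_le_pow_of_lamFam_eq hbdd hℓ hL one_le_two le_rfl
  rw [hL]
  refine lam_le_of_abs_pderiv_pow_le (by positivity) fun i p x hp hp₂ hx => ?_
  interval_cases p
  · have h := abs_pderiv_one_smoothMax_le hI hf hα₀ b₁ i hx
    calc |pderiv n (smoothMax α f) i 1 x| ^ 2 ≤ (ℓ ^ 1) ^ 2 := by gcongr
      _ ≤ (3 * α * ℓ ^ 2) ^ 1 := by nlinarith
  · have h := abs_pderiv_two_smoothMax_le hI hf hα₀ b₁ b₂ i hx
    have h' : |pderiv n (smoothMax α f) i 2 x| ≤ 3 * α * ℓ ^ 2 := by nlinarith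
    gcongr

theorem lam_three_smoothMax_le (hbdd : BddAbove (lamFamSet n I f 3)) :
    lam n I (smoothMax α f) 3 ≤ 13 * α ^ 2 * lamFam n I f 3 := by
  obtain ⟨ℓ, hℓ, hL⟩ := exists_lamFam_eq_pow f three_ne_zero
  have hα₀ : 0 < α := by linarith
  have b₁ := abs_pderiv_le_pow_of_lamFam_eq hbdd hℓ hL le_rfl (by norm_num : 1 ≤ 3)
  have b₂ := abs_pderiv_le_pow_of_lamFam_eq hbdd hℓ hL one_le_two (by norm_num : 2 ≤ 3)
  have b₃ := abs_pderiv_le_pow_of_lamFam_eq hbdd hℓ hL (by norm_num : 1 ≤ 3) le_rfl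
  rw [hL]
  refine lam_le_of_abs_pderiv_pow_le (by positivity) fun i p x hp hp₃ hx => ?_
  interval_cases p
  · have h := abs_pderiv_one_smoothMax_le hI hf hα₀ b₁ i hx
    calc |pderiv n (smoothMax α f) i 1 x| ^ 3 ≤ (ℓ ^ 1) ^ 3 := by gcongr
      _ ≤ (13 * α ^ 2 * ℓ ^ 3) ^ 1 := by
        simp only [pow_one]; exact le_mul_of_one_le_left (by positivity) (by nlinarith)
  · have h := abs_pderiv_two_smoothMax_le hI hf hα₀ b₁ b₂ i hx
    calc |pderiv n (smoothMax α f) i 2 x| ^ 3 ≤ (3 * α * ℓ ^ 2) ^ 3 := by gcongr; nlinarith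
      _ = 27 * α ^ 3 * ℓ ^ 6 := by ring
      _ ≤ 169 * α ^ 4 * ℓ ^ 6 := by
        gcongr ?_ * _; nlinarith [mul_le_mul_of_nonneg_left hα (pow_pos hα₀ 3).le, pow_pos hα₀ 4]
      _ = (13 * α ^ 2 * ℓ ^ 3) ^ 2 := by ring
  · have h := abs_pderiv_three_smoothMax_le hI hf hα₀ b₁ b₂ b₃ i hx
    have h' : |pderiv n (smoothMax α f) i 3 x| ≤ 13 * α ^ 2 * ℓ ^ 3 :=
      calc _ ≤ (1 + 6 * α + 6 * α ^ 2) * ℓ ^ 3 := by linarith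
        _ ≤ 13 * α ^ 2 * ℓ ^ 3 := by gcongr; nlinarith
    gcongr

end Lambda

theorem stmt2_general
    {n : ℕ} {I : Set ℝ} (hIopen : IsOpen I)
    {κ : Type} [Fintype κ] [Nonempty κ]
    (f : κ → (Fin n → ℝ) → ℝ) (hf : ∀ k, CoordDiff3 n I (f k))
    (hbdd2 : BddAbove (lamFamSet n I f 2))
    (hbdd3 : BddAbove (lamFamSet n I f 3))
    (α : ℝ) (hα : 1 ≤ α)
    (F : (Fin n → ℝ) → ℝ)
    (hF : ∀ x, F x = α⁻¹ * Real.log (∑ k, Real.exp (α * f k x))) :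
    lam n I F 2 ≤ 3 * α * lamFam n I f 2 ∧
      lam n I F 3 ≤ 13 * α ^ 2 * lamFam n I f 3 := by
  obtain rfl : F = smoothMax α f := funext hF
  exact ⟨lam_two_smoothMax_le hIopen hf hα hbdd2, lam_three_smoothMax_le hIopen hf hα hbdd3⟩

theorem stmt2
    {n : ℕ} {I : Set ℝ} (hIopen : IsOpen I) (hIconn : I.OrdConnected)
    (hI0 : (0 : ℝ) ∈ I)
    {κ : Type} [Fintype κ] [Nonempty κ]
    (f : κ → (Fin n → ℝ) → ℝ) (hf : ∀ k, CoordDiff3 n I (f k))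
    (hbdd1 : BddAbove (lamFamSet n I f 1))
    (hbdd2 : BddAbove (lamFamSet n I f 2))
    (hbdd3 : BddAbove (lamFamSet n I f 3))
    (α : ℝ) (hα : 1 ≤ α)
    (F : (Fin n → ℝ) → ℝ)
    (hF : ∀ x, F x = α⁻¹ * Real.log (∑ k, Real.exp (α * f k x))) :
    lam n I F 2 ≤ 3 * α * lamFam n I f 2 ∧
      lam n I F 3 ≤ 13 * α ^ 2 * lamFam n I f 3 :=
  stmt2_general hIopen f hf hbdd2 hbdd3 α hα F hF
end

section
/- Let X₁,…,Xₙ be i.i.d. real random variables and Y₁,…,Yₙ be i.i.d. real random variables, with the two families independent of each other, E[X₁] = E[Y₁] = 0, E[X₁²] = E[Y₁²] = 1, E|X₁|³ < ∞ and E|Y₁|³ < ∞. Then for every thrice differentiable g : ℝ → ℝ with bounded first three derivatives, |E g(n^{-1/2} Σᵢ₌₁ⁿ Xᵢ) − E g(n^{-1/2} Σᵢ₌₁ⁿ Yᵢ)| ≤ C₂(g) (E|X₁|³ + E|Y₁|³) / √n. -/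
/-!
Lindeberg's replacement argument: swap the `X`'s for the `Y`'s one at a time. At each swap both
`g (W + Xᵢ)` and `g (W + Yᵢ)` are expanded to second order around the sum `W` of the other
summands. Since `W` is independent of `Xᵢ` and of `Yᵢ`, which have the same first two moments, the
expected Taylor polynomials coincide, and only the third-order remainders survive, of size at most
`‖g‴‖∞ (E|Xᵢ|³ + E|Yᵢ|³) / 6`. The normalisation is absorbed into `g`: the third derivative of
`x ↦ g (x / √n)` is bounded by `‖g‴‖∞ / n^{3/2}`, so the `n` swaps cost
`‖g‴‖∞ (E|X₁|³ + E|Y₁|³) / (6 √n)`, which is at most the claimed bound.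
-/

open MeasureTheory ProbabilityTheory Finset

theorem hasDerivAt_comp_const_mul {f f' : ℝ → ℝ} (hf : ∀ x, HasDerivAt f (f' x) x) (c x : ℝ) :
    HasDerivAt (fun x => f (c * x)) (c * f' (c * x)) x := by
  have := (hf (c * x)).comp x ((hasDerivAt_id x).const_mul c)
  rw [mul_one] at this
  rwa [mul_comm]

theorem hasDerivAt_iteratedDeriv {f : ℝ → ℝ} {p : ℕ} (hf : Differentiable ℝ (iteratedDeriv p f))
    (x : ℝ) : HasDerivAt (iteratedDeriv p f) (iteratedDeriv (p + 1) f x) x := by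
  rw [iteratedDeriv_succ]
  exact (hf x).hasDerivAt

theorem abs_le_of_hasDerivAt_of_abs_le_pow {h h' : ℝ → ℝ} (hh : ∀ x, HasDerivAt h (h' x) x)
    (h0 : h 0 = 0) {C : ℝ} {k : ℕ} (hbound : ∀ x, |h' x| ≤ C * |x| ^ k) (t : ℝ) :
    |h t| ≤ C * |t| ^ (k + 1) / (k + 1) := by
  wlog ht : 0 ≤ t generalizing h h' t
  · have hneg (x : ℝ) : HasDerivAt (fun x => h (-x)) (-h' (-x)) x := by
      have := (hh (-x)).comp x (hasDerivAt_neg x)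
      simp only [mul_neg, mul_one] at this
      exact this
    simpa using this hneg (by simpa using h0) (fun x => by simpa using hbound (-x)) (-t)
      (by linarith)
  have hB (x : ℝ) : HasDerivAt (fun x => C * x ^ (k + 1) / (k + 1)) (C * x ^ k) x := by
    refine (((hasDerivAt_pow (k + 1) x).const_mul C).div_const ((k : ℝ) + 1)).congr_deriv ?_
    rw [Nat.add_sub_cancel]
    push_cast
    field_simp
  have := image_norm_le_of_norm_deriv_right_le_deriv_boundary
    (fun x _ => (hh x).continuousAt.continuousWithinAt) (fun x _ => (hh x).hasDerivWithinAt)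
    (by simp [h0]) hB (fun x hx => by simpa [abs_of_nonneg hx.1] using hbound x)
    (Set.right_mem_Icc.2 ht)
  simpa [abs_of_nonneg ht] using this

theorem abs_taylor_two_remainder_le {g g₁ g₂ g₃ : ℝ → ℝ} (hg : ∀ x, HasDerivAt g (g₁ x) x)
    (hg₁ : ∀ x, HasDerivAt g₁ (g₂ x) x) (hg₂ : ∀ x, HasDerivAt g₂ (g₃ x) x) {B : ℝ}
    (hB : ∀ x, |g₃ x| ≤ B) (a t : ℝ) :
    |g (a + t) - g a - g₁ a * t - g₂ a * t ^ 2 / 2| ≤ B * |t| ^ 3 / 6 := by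
  have hsq (s : ℝ) : HasDerivAt (fun s => g₂ a * s ^ 2 / 2) (g₂ a * s) s :=
    (((hasDerivAt_pow 2 s).const_mul (g₂ a)).div_const 2).congr_deriv (by ring)
  have hlin (m s : ℝ) : HasDerivAt (fun s => m * s) m s := by
    simpa using (hasDerivAt_id s).const_mul m
  have hg₂_sub (s : ℝ) : |g₂ (a + s) - g₂ a| ≤ B * |s| ^ 1 := by
    simpa using abs_le_of_hasDerivAt_of_abs_le_pow
      (fun s => ((hg₂ (a + s)).comp_const_add a s).sub_const (g₂ a)) (by simp)
      (k := 0) (fun s => by simpa using hB (a + s)) s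
  have hg₁_sub (s : ℝ) : |g₁ (a + s) - g₁ a - g₂ a * s| ≤ B / 2 * |s| ^ 2 := by
    have := abs_le_of_hasDerivAt_of_abs_le_pow
      (fun s => (((hg₁ (a + s)).comp_const_add a s).sub_const (g₁ a)).sub (hlin _ s)) (by simp)
      hg₂_sub s
    refine this.trans_eq ?_
    norm_num
    ring
  have := abs_le_of_hasDerivAt_of_abs_le_pow
    (fun s => ((((hg (a + s)).comp_const_add a s).sub_const (g a)).sub (hlin _ s)).sub (hsq s))
    (by simp) hg₁_sub t
  refine this.trans_eq ?_
  norm_num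
  ring

theorem ProbabilityTheory.iIndepFun.piecewise {Ω ι β : Type*} [MeasurableSpace Ω] {μ : Measure Ω}
    [MeasurableSpace β] {f g : ι → Ω → β} (h : iIndepFun (Sum.elim f g) μ) (s : Finset ι)
    [DecidablePred (· ∈ s)] : iIndepFun (s.piecewise f g) μ := by
  have hinj : Function.Injective fun i => if i ∈ s then Sum.inl i else (Sum.inr i : ι ⊕ ι) := by
    intro i j hij
    by_cases hi : i ∈ s <;> by_cases hj : j ∈ s <;> simp_all
  convert h.precomp hinj using 1
  funext i
  by_cases hi : i ∈ s <;> simp [hi]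

section Lindeberg

variable {Ω : Type*} [MeasurableSpace Ω] {μ : Measure Ω} {g g₁ g₂ g₃ : ℝ → ℝ}

theorem integrable_comp_of_abs_deriv_le [IsFiniteMeasure μ] (hg : ∀ x, HasDerivAt g (g₁ x) x)
    {B : ℝ} (hB : ∀ x, |g₁ x| ≤ B) {W : Ω → ℝ} (hW : Integrable W μ) :
    Integrable (fun ω => g (W ω)) μ := by
  have hlip (x : ℝ) : |g x| ≤ |g 0| + B * |x| := by
    have := abs_le_of_hasDerivAt_of_abs_le_pow (fun x => (hg x).sub_const (g 0)) (sub_self _)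
      (k := 0) (fun x => by simpa using hB x) x
    norm_num at this
    linarith [abs_sub_abs_le_abs_sub (g x) (g 0)]
  have hcont : Continuous g := continuous_iff_continuousAt.2 fun x => (hg x).continuousAt
  refine ((integrable_const |g 0|).add (hW.abs.const_mul B)).mono'
    (hcont.comp_aestronglyMeasurable hW.aestronglyMeasurable) (ae_of_all _ fun ω => hlip (W ω))

variable [IsProbabilityMeasure μ] {B₁ B₂ B₃ : ℝ}

theorem abs_integral_comp_add_sub_taylor_le (hg : ∀ x, HasDerivAt g (g₁ x) x)
    (hg₁ : ∀ x, HasDerivAt g₁ (g₂ x) x) (hg₂ : ∀ x, HasDerivAt g₂ (g₃ x) x)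
    (hB₁ : ∀ x, |g₁ x| ≤ B₁) (hB₂ : ∀ x, |g₂ x| ≤ B₂) (hB₃ : ∀ x, |g₃ x| ≤ B₃)
    {W ζ : Ω → ℝ} (hW : Integrable W μ) (hζ : MemLp ζ 3 μ) (hind : IndepFun W ζ μ) :
    |∫ ω, g (W ω + ζ ω) ∂μ - (∫ ω, g (W ω) ∂μ + (∫ ω, g₁ (W ω) ∂μ) * (∫ ω, ζ ω ∂μ)
        + (∫ ω, g₂ (W ω) ∂μ) * (∫ ω, ζ ω ^ 2 ∂μ) / 2)| ≤ B₃ * (∫ ω, |ζ ω| ^ 3 ∂μ) / 6 := by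
  have hζ₁ : Integrable ζ μ := hζ.integrable (by norm_num)
  have hζ₂ : Integrable (fun ω => ζ ω ^ 2) μ := (hζ.mono_exponent (by norm_num)).integrable_sq
  have hζ₃ : Integrable (fun ω => |ζ ω| ^ 3) μ := hζ.integrable_norm_pow (p := 3) (by norm_num)
  have hi₀ : Integrable (fun ω => g (W ω + ζ ω)) μ :=
    integrable_comp_of_abs_deriv_le hg hB₁ (hW.add hζ₁)
  have hiW := integrable_comp_of_abs_deriv_le hg hB₁ hW
  have hcont₁ : Continuous g₁ := continuous_iff_continuousAt.2 fun x => (hg₁ x).continuousAt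
  have hcont₂ : Continuous g₂ := continuous_iff_continuousAt.2 fun x => (hg₂ x).continuousAt
  have hm₁ := hcont₁.comp_aestronglyMeasurable hW.aestronglyMeasurable
  have hm₂ := hcont₂.comp_aestronglyMeasurable hW.aestronglyMeasurable
  have hi₁ : Integrable (fun ω => g₁ (W ω) * ζ ω) μ := hζ₁.bdd_mul hm₁ (ae_of_all _ (hB₁ <| W ·))
  have hi₂ : Integrable (fun ω => g₂ (W ω) * ζ ω ^ 2) μ :=
    hζ₂.bdd_mul hm₂ (ae_of_all _ (hB₂ <| W ·))
  have he₁ : ∫ ω, g₁ (W ω) * ζ ω ∂μ = (∫ ω, g₁ (W ω) ∂μ) * ∫ ω, ζ ω ∂μ :=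
    (hind.comp hcont₁.measurable measurable_id).integral_fun_mul_eq_mul_integral hm₁
      hζ₁.aestronglyMeasurable
  have he₂ : ∫ ω, g₂ (W ω) * ζ ω ^ 2 ∂μ = (∫ ω, g₂ (W ω) ∂μ) * ∫ ω, ζ ω ^ 2 ∂μ :=
    (hind.comp hcont₂.measurable (measurable_id.pow_const 2)).integral_fun_mul_eq_mul_integral
      hm₂ hζ₂.aestronglyMeasurable
  have hremainder : ∫ ω, g (W ω + ζ ω) ∂μ - (∫ ω, g (W ω) ∂μ
      + (∫ ω, g₁ (W ω) ∂μ) * (∫ ω, ζ ω ∂μ) + (∫ ω, g₂ (W ω) ∂μ) * (∫ ω, ζ ω ^ 2 ∂μ) / 2)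
      = ∫ ω, (g (W ω + ζ ω) - g (W ω) - g₁ (W ω) * ζ ω - g₂ (W ω) * ζ ω ^ 2 / 2) ∂μ := by
    have hi₀₁ : Integrable (fun ω => g (W ω + ζ ω) - g (W ω)) μ := hi₀.sub hiW
    have hi₀₁₂ : Integrable (fun ω => g (W ω + ζ ω) - g (W ω) - g₁ (W ω) * ζ ω) μ := hi₀₁.sub hi₁
    rw [integral_sub hi₀₁₂ (hi₂.div_const 2), integral_sub hi₀₁ hi₁, integral_sub hi₀ hiW,
      integral_div, he₁, he₂]
    ring
  rw [hremainder]
  calc _ ≤ ∫ ω, B₃ * |ζ ω| ^ 3 / 6 ∂μ :=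
        abs_integral_le_integral_abs.trans <|
          integral_mono_of_nonneg (ae_of_all _ fun _ => abs_nonneg _)
            ((hζ₃.const_mul B₃).div_const 6)
            (ae_of_all _ fun ω => abs_taylor_two_remainder_le hg hg₁ hg₂ hB₃ (W ω) (ζ ω))
    _ = B₃ * (∫ ω, |ζ ω| ^ 3 ∂μ) / 6 := by rw [integral_div, integral_const_mul]

theorem abs_integral_comp_add_sub_comp_add_le (hg : ∀ x, HasDerivAt g (g₁ x) x)
    (hg₁ : ∀ x, HasDerivAt g₁ (g₂ x) x) (hg₂ : ∀ x, HasDerivAt g₂ (g₃ x) x)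
    (hB₁ : ∀ x, |g₁ x| ≤ B₁) (hB₂ : ∀ x, |g₂ x| ≤ B₂) (hB₃ : ∀ x, |g₃ x| ≤ B₃)
    {W ξ η : Ω → ℝ} (hW : Integrable W μ) (hξ : MemLp ξ 3 μ) (hη : MemLp η 3 μ)
    (hWξ : IndepFun W ξ μ) (hWη : IndepFun W η μ) (hmean : ∫ ω, ξ ω ∂μ = ∫ ω, η ω ∂μ)
    (hvar : ∫ ω, ξ ω ^ 2 ∂μ = ∫ ω, η ω ^ 2 ∂μ) :
    |∫ ω, g (W ω + ξ ω) ∂μ - ∫ ω, g (W ω + η ω) ∂μ| ≤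
      B₃ * (∫ ω, |ξ ω| ^ 3 ∂μ + ∫ ω, |η ω| ^ 3 ∂μ) / 6 := by
  have hξ' := abs_integral_comp_add_sub_taylor_le hg hg₁ hg₂ hB₁ hB₂ hB₃ hW hξ hWξ
  have hη' := abs_integral_comp_add_sub_taylor_le hg hg₁ hg₂ hB₁ hB₂ hB₃ hW hη hWη
  rw [hmean, hvar] at hξ'
  rw [abs_le] at hξ' hη' ⊢
  constructor <;> linarith [hξ'.1, hξ'.2, hη'.1, hη'.2]

variable {ι : Type*} [Fintype ι]

theorem abs_integral_comp_sum_piecewise_insert_sub_le [DecidableEq ι]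
    (hg : ∀ x, HasDerivAt g (g₁ x) x)
    (hg₁ : ∀ x, HasDerivAt g₁ (g₂ x) x) (hg₂ : ∀ x, HasDerivAt g₂ (g₃ x) x)
    (hB₁ : ∀ x, |g₁ x| ≤ B₁) (hB₂ : ∀ x, |g₂ x| ≤ B₂) (hB₃ : ∀ x, |g₃ x| ≤ B₃)
    {ξ η : ι → Ω → ℝ} (hind : iIndepFun (Sum.elim ξ η) μ) (hξ : ∀ i, MemLp (ξ i) 3 μ)
    (hη : ∀ i, MemLp (η i) 3 μ) (hmean : ∀ i, ∫ ω, ξ i ω ∂μ = ∫ ω, η i ω ∂μ)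
    (hvar : ∀ i, ∫ ω, ξ i ω ^ 2 ∂μ = ∫ ω, η i ω ^ 2 ∂μ) {s : Finset ι} {a : ι} (ha : a ∉ s) :
    |∫ ω, g (∑ i, (insert a s).piecewise ξ η i ω) ∂μ - ∫ ω, g (∑ i, s.piecewise ξ η i ω) ∂μ| ≤
      B₃ * (∫ ω, |ξ a ω| ^ 3 ∂μ + ∫ ω, |η a ω| ^ 3 ∂μ) / 6 := by
  have hmem (t : Finset ι) (i : ι) : MemLp (t.piecewise ξ η i) 3 μ :=
    t.piecewise_cases ξ η (fun f => MemLp f 3 μ) (hξ i) (hη i)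
  set W := ∑ i ∈ univ.erase a, s.piecewise ξ η i
  have hW_insert : W = ∑ i ∈ univ.erase a, (insert a s).piecewise ξ η i :=
    sum_congr rfl fun i hi => (s.piecewise_insert_of_ne ξ η (ne_of_mem_erase hi)).symm
  have hsum_insert (ω : Ω) : ∑ i, (insert a s).piecewise ξ η i ω = W ω + ξ a ω := by
    rw [hW_insert, Finset.sum_apply, ← add_sum_erase _ _ (mem_univ a), piecewise_insert_self,
      add_comm]
  have hsum (ω : Ω) : ∑ i, s.piecewise ξ η i ω = W ω + η a ω := by
    simp only [W, Finset.sum_apply]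
    rw [← add_sum_erase _ _ (mem_univ a), piecewise_eq_of_notMem _ _ _ ha, add_comm]
  have hWξ : IndepFun W (ξ a) μ := by
    have := (hind.piecewise (insert a s)).indepFun_finsetSum_of_notMem₀
      (fun i => (hmem _ i).aemeasurable) (notMem_erase a univ)
    rwa [← hW_insert, piecewise_insert_self] at this
  have hWη : IndepFun W (η a) μ := by
    have := (hind.piecewise s).indepFun_finsetSum_of_notMem₀
      (fun i => (hmem _ i).aemeasurable) (notMem_erase a univ)
    rwa [piecewise_eq_of_notMem _ _ _ ha] at this
  have hW : Integrable W μ :=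
    integrable_finsetSum' _ fun i _ => (hmem s i).integrable (by norm_num)
  simp only [hsum_insert, hsum]
  exact abs_integral_comp_add_sub_comp_add_le hg hg₁ hg₂ hB₁ hB₂ hB₃ hW (hξ a) (hη a) hWξ hWη
    (hmean a) (hvar a)

theorem abs_integral_comp_sum_sub_le (hg : ∀ x, HasDerivAt g (g₁ x) x)
    (hg₁ : ∀ x, HasDerivAt g₁ (g₂ x) x) (hg₂ : ∀ x, HasDerivAt g₂ (g₃ x) x)
    (hB₁ : ∀ x, |g₁ x| ≤ B₁) (hB₂ : ∀ x, |g₂ x| ≤ B₂) (hB₃ : ∀ x, |g₃ x| ≤ B₃)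
    {ξ η : ι → Ω → ℝ} (hind : iIndepFun (Sum.elim ξ η) μ) (hξ : ∀ i, MemLp (ξ i) 3 μ)
    (hη : ∀ i, MemLp (η i) 3 μ) (hmean : ∀ i, ∫ ω, ξ i ω ∂μ = ∫ ω, η i ω ∂μ)
    (hvar : ∀ i, ∫ ω, ξ i ω ^ 2 ∂μ = ∫ ω, η i ω ^ 2 ∂μ) :
    |∫ ω, g (∑ i, ξ i ω) ∂μ - ∫ ω, g (∑ i, η i ω) ∂μ| ≤
      B₃ * (∑ i, (∫ ω, |ξ i ω| ^ 3 ∂μ + ∫ ω, |η i ω| ^ 3 ∂μ)) / 6 := by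
  classical
  suffices h : ∀ s : Finset ι, |∫ ω, g (∑ i, s.piecewise ξ η i ω) ∂μ - ∫ ω, g (∑ i, η i ω) ∂μ| ≤
      B₃ * (∑ i ∈ s, (∫ ω, |ξ i ω| ^ 3 ∂μ + ∫ ω, |η i ω| ^ 3 ∂μ)) / 6 by
    simpa using h univ
  intro s
  induction s using Finset.induction_on with
  | empty => simp
  | insert a s ha ih =>
    have hstep := abs_integral_comp_sum_piecewise_insert_sub_le hg hg₁ hg₂ hB₁ hB₂ hB₃ hind hξ hη
      hmean hvar ha
    refine (abs_sub_le _ _ _).trans ((add_le_add hstep ih).trans_eq ?_)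
    rw [sum_insert ha]
    ring

theorem abs_integral_comp_const_mul_sum_sub_le (hg : ∀ x, HasDerivAt g (g₁ x) x)
    (hg₁ : ∀ x, HasDerivAt g₁ (g₂ x) x) (hg₂ : ∀ x, HasDerivAt g₂ (g₃ x) x)
    (hB₁ : ∀ x, |g₁ x| ≤ B₁) (hB₂ : ∀ x, |g₂ x| ≤ B₂) (hB₃ : ∀ x, |g₃ x| ≤ B₃) {c : ℝ}
    (hc : 0 ≤ c) {ξ η : ι → Ω → ℝ} (hind : iIndepFun (Sum.elim ξ η) μ)
    (hξ : ∀ i, MemLp (ξ i) 3 μ) (hη : ∀ i, MemLp (η i) 3 μ)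
    (hmean : ∀ i, ∫ ω, ξ i ω ∂μ = ∫ ω, η i ω ∂μ)
    (hvar : ∀ i, ∫ ω, ξ i ω ^ 2 ∂μ = ∫ ω, η i ω ^ 2 ∂μ) :
    |∫ ω, g (c * ∑ i, ξ i ω) ∂μ - ∫ ω, g (c * ∑ i, η i ω) ∂μ| ≤
      c ^ 3 * B₃ * (∑ i, (∫ ω, |ξ i ω| ^ 3 ∂μ + ∫ ω, |η i ω| ^ 3 ∂μ)) / 6 := by
  have hscale {y B : ℝ} (h : |y| ≤ B) : |c * y| ≤ c * B := by
    rw [abs_mul, abs_of_nonneg hc]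
    exact mul_le_mul_of_nonneg_left h hc
  refine (abs_integral_comp_sum_sub_le (hasDerivAt_comp_const_mul hg c)
    (fun x => (hasDerivAt_comp_const_mul hg₁ c x).const_mul c)
    (fun x => ((hasDerivAt_comp_const_mul hg₂ c x).const_mul c).const_mul c)
    (fun _ => hscale (hB₁ _)) (fun _ => hscale (hscale (hB₂ _)))
    (fun _ => hscale (hscale (hscale (hB₃ _)))) hind hξ hη hmean hvar).trans_eq ?_
  ring

theorem abs_integral_comp_const_mul_sum_sub_le_of_identDistrib (hg : ∀ x, HasDerivAt g (g₁ x) x)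
    (hg₁ : ∀ x, HasDerivAt g₁ (g₂ x) x) (hg₂ : ∀ x, HasDerivAt g₂ (g₃ x) x)
    (hB₁ : ∀ x, |g₁ x| ≤ B₁) (hB₂ : ∀ x, |g₂ x| ≤ B₂) (hB₃ : ∀ x, |g₃ x| ≤ B₃) {c : ℝ}
    (hc : 0 ≤ c) {ξ η : ι → Ω → ℝ} {ξ₀ η₀ : Ω → ℝ} (hξid : ∀ i, IdentDistrib (ξ i) ξ₀ μ μ)
    (hηid : ∀ i, IdentDistrib (η i) η₀ μ μ) (hind : iIndepFun (Sum.elim ξ η) μ)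
    (hξ₀ : MemLp ξ₀ 3 μ) (hη₀ : MemLp η₀ 3 μ) (hmean : ∫ ω, ξ₀ ω ∂μ = ∫ ω, η₀ ω ∂μ)
    (hvar : ∫ ω, ξ₀ ω ^ 2 ∂μ = ∫ ω, η₀ ω ^ 2 ∂μ) :
    |∫ ω, g (c * ∑ i, ξ i ω) ∂μ - ∫ ω, g (c * ∑ i, η i ω) ∂μ| ≤
      c ^ 3 * B₃ * Fintype.card ι * (∫ ω, |ξ₀ ω| ^ 3 ∂μ + ∫ ω, |η₀ ω| ^ 3 ∂μ) / 6 := by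
  have hξmom {f : ℝ → ℝ} (hf : Measurable f) (i : ι) :
      ∫ ω, f (ξ i ω) ∂μ = ∫ ω, f (ξ₀ ω) ∂μ := ((hξid i).comp hf).integral_eq
  have hηmom {f : ℝ → ℝ} (hf : Measurable f) (i : ι) :
      ∫ ω, f (η i ω) ∂μ = ∫ ω, f (η₀ ω) ∂μ := ((hηid i).comp hf).integral_eq
  refine (abs_integral_comp_const_mul_sum_sub_le hg hg₁ hg₂ hB₁ hB₂ hB₃ hc hind
    (fun i => (hξid i).memLp_iff.2 hξ₀) (fun i => (hηid i).memLp_iff.2 hη₀)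
    (fun i => by rw [(hξid i).integral_eq, (hηid i).integral_eq, hmean])
    (fun i => by
      simp only [hξmom (f := (· ^ 2)) (by fun_prop), hηmom (f := (· ^ 2)) (by fun_prop), hvar])
    ).trans_eq ?_
  simp only [hξmom (f := (|·| ^ 3)) (by fun_prop), hηmom (f := (|·| ^ 3)) (by fun_prop),
    sum_const, card_univ, nsmul_eq_mul]
  ring

end Lindeberg

theorem stmt5_general
    {Ω : Type} [MeasurableSpace Ω] {μ : Measure Ω} [IsProbabilityMeasure μ]
    {n : ℕ} (hn : 0 < n)
    (X Y : Fin n → Ω → ℝ)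
    (hXid : ∀ i, IdentDistrib (X i) (X ⟨0, hn⟩) μ μ)
    (hYid : ∀ i, IdentDistrib (Y i) (Y ⟨0, hn⟩) μ μ)
    (hindep : iIndepFun (Sum.elim X Y) μ)
    (hX3 : MemLp (X ⟨0, hn⟩) 3 μ) (hY3 : MemLp (Y ⟨0, hn⟩) 3 μ)
    (hXmean : ∫ ω, X ⟨0, hn⟩ ω ∂μ = 0) (hYmean : ∫ ω, Y ⟨0, hn⟩ ω ∂μ = 0)
    (hXvar : ∫ ω, (X ⟨0, hn⟩ ω) ^ 2 ∂μ = 1)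
    (hYvar : ∫ ω, (Y ⟨0, hn⟩ ω) ^ 2 ∂μ = 1)
    (g : ℝ → ℝ) (hg : ∀ p < 3, Differentiable ℝ (iteratedDeriv p g))
    (B1 B2 B3 : ℝ)
    (hB1 : ∀ t, |deriv g t| ≤ B1)
    (hB2 : ∀ t, |iteratedDeriv 2 g t| ≤ B2)
    (hB3 : ∀ t, |iteratedDeriv 3 g t| ≤ B3) :
    |(∫ ω, g ((Real.sqrt n)⁻¹ * ∑ i, X i ω) ∂μ) -
        ∫ ω, g ((Real.sqrt n)⁻¹ * ∑ i, Y i ω) ∂μ| ≤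
      (B1 / 6 + B2 / 2 + B3 / 6) *
        ((∫ ω, |X ⟨0, hn⟩ ω| ^ 3 ∂μ) + ∫ ω, |Y ⟨0, hn⟩ ω| ^ 3 ∂μ) /
        Real.sqrt n := by
  have hd₀ : ∀ x, HasDerivAt g (deriv g x) x := by
    simpa using hasDerivAt_iteratedDeriv (hg 0 (by norm_num))
  have hd₁ : ∀ x, HasDerivAt (deriv g) (iteratedDeriv 2 g x) x := by
    simpa using hasDerivAt_iteratedDeriv (hg 1 (by norm_num))
  have hd₂ := hasDerivAt_iteratedDeriv (hg 2 (by norm_num))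
  have hlind := abs_integral_comp_const_mul_sum_sub_le_of_identDistrib hd₀ hd₁ hd₂ hB1 hB2 hB3
    (c := (Real.sqrt n)⁻¹) (by positivity) hXid hYid hindep hX3 hY3 (hXmean.trans hYmean.symm)
    (hXvar.trans hYvar.symm)
  rw [Fintype.card_fin] at hlind
  have hcube : (Real.sqrt n)⁻¹ ^ 3 * n = (Real.sqrt n)⁻¹ := by
    have : Real.sqrt n ≠ 0 := by positivity
    field_simp
    exact (Real.sq_sqrt n.cast_nonneg).symm
  have hB : B3 / 6 ≤ B1 / 6 + B2 / 2 + B3 / 6 := by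
    linarith [(abs_nonneg _).trans (hB1 0), (abs_nonneg _).trans (hB2 0)]
  set M := ∫ ω, |X ⟨0, hn⟩ ω| ^ 3 ∂μ + ∫ ω, |Y ⟨0, hn⟩ ω| ^ 3 ∂μ
  calc _ ≤ _ := hlind
    _ = B3 / 6 * M * (Real.sqrt n)⁻¹ := by linear_combination B3 / 6 * M * hcube
    _ ≤ (B1 / 6 + B2 / 2 + B3 / 6) * M * (Real.sqrt n)⁻¹ := by gcongr
    _ = _ := (div_eq_mul_inv _ _).symm

theorem stmt5
    {Ω : Type} [MeasurableSpace Ω] {μ : Measure Ω} [IsProbabilityMeasure μ]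
    {n : ℕ} (hn : 0 < n)
    (X Y : Fin n → Ω → ℝ)
    (hXmeas : ∀ i, Measurable (X i)) (hYmeas : ∀ i, Measurable (Y i))
    (hXid : ∀ i, IdentDistrib (X i) (X ⟨0, hn⟩) μ μ)
    (hYid : ∀ i, IdentDistrib (Y i) (Y ⟨0, hn⟩) μ μ)
    (hindep : iIndepFun (Sum.elim X Y) μ)
    (hX3 : MemLp (X ⟨0, hn⟩) 3 μ) (hY3 : MemLp (Y ⟨0, hn⟩) 3 μ)
    (hXmean : ∫ ω, X ⟨0, hn⟩ ω ∂μ = 0) (hYmean : ∫ ω, Y ⟨0, hn⟩ ω ∂μ = 0)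
    (hXvar : ∫ ω, (X ⟨0, hn⟩ ω) ^ 2 ∂μ = 1)
    (hYvar : ∫ ω, (Y ⟨0, hn⟩ ω) ^ 2 ∂μ = 1)
    (g : ℝ → ℝ) (hg : ∀ p < 3, Differentiable ℝ (iteratedDeriv p g))
    (B1 B2 B3 : ℝ)
    (hB1 : ∀ t, |deriv g t| ≤ B1)
    (hB2 : ∀ t, |iteratedDeriv 2 g t| ≤ B2)
    (hB3 : ∀ t, |iteratedDeriv 3 g t| ≤ B3) :
    |(∫ ω, g ((Real.sqrt n)⁻¹ * ∑ i, X i ω) ∂μ) -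
        ∫ ω, g ((Real.sqrt n)⁻¹ * ∑ i, Y i ω) ∂μ| ≤
      (B1 / 6 + B2 / 2 + B3 / 6) *
        ((∫ ω, |X ⟨0, hn⟩ ω| ^ 3 ∂μ) + ∫ ω, |Y ⟨0, hn⟩ ω| ^ 3 ∂μ) /
        Real.sqrt n :=
  stmt5_general hn X Y hXid hYid hindep hX3 hY3 hXmean hYmean hXvar hYvar g hg B1 B2 B3 hB1 hB2 hB3
end

section
/- Let X₁,…,Xₙ be i.i.d. real random variables and Y₁,…,Yₙ be i.i.d. real random variables, with the two families independent of each other, E[X₁] = E[Y₁] = 0 and E[X₁²] = E[Y₁²] = 1. Then for every thrice differentiable g : ℝ → ℝ with bounded first three derivatives and every ε > 0, |E g(n^{-1/2} Σᵢ₌₁ⁿ Xᵢ) − E g(n^{-1/2} Σᵢ₌₁ⁿ Yᵢ)| ≤ C₁(g) [E(X₁²; |X₁| > ε√n) + E(Y₁²; |Y₁| > ε√n)] + 2 C₂(g) ε. -/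
/-!
Lindeberg's replacement trick: swap the `Y`'s for the `X`'s one at a time. Two neighbouring
hybrid sums are `T + X_k/√n` and `T + Y_k/√n` with `T` independent of `X_k` and `Y_k`. Expanding
`g` to second order around `T`, the constant, linear and quadratic terms have equal expectations
because `X_k` and `Y_k` share their first two moments, so the swap costs at most the expected
Taylor remainders `min (B₂ v², B₃ |v|³ / 6)` at `v = X_k/√n` and at `v = Y_k/√n`. Bounding such a
remainder by `B₂ v²` on `{|v| > ε}` and by `B₃ ε v² / 6` elsewhere and summing over the `n` swaps
gives the claim.
-/

open Set Finset MeasureTheory ProbabilityTheory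
open scoped Nat

section Taylor

theorem iteratedDerivWithin_eqOn_iteratedDeriv {𝕜 F : Type*} [NontriviallyNormedField 𝕜]
    [NormedAddCommGroup F] [NormedSpace 𝕜 F] {g : 𝕜 → F} {s : Set 𝕜} (hs : UniqueDiffOn 𝕜 s)
    {k : ℕ} (hg : ∀ j < k, Differentiable 𝕜 (iteratedDeriv j g)) :
    EqOn (iteratedDerivWithin k g s) (iteratedDeriv k g) s := by
  induction k with
  | zero => intro x _; simp
  | succ k ih =>
    intro x hx
    have ih' := ih fun j hj => hg j (by omega)
    rw [iteratedDerivWithin_succ, derivWithin_congr ih' (ih' hx),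
      ((hg k k.lt_succ_self).differentiableAt).derivWithin (hs x hx), iteratedDeriv_succ]

/-- Unlike `taylor_mean_remainder_lagrange_iteratedDeriv`, this needs no continuity of `g⁽ⁿ⁺¹⁾`. -/
theorem exists_taylor_lagrange_of_differentiable_iteratedDeriv {g : ℝ → ℝ} {n : ℕ}
    (hg : ∀ j < n + 1, Differentiable ℝ (iteratedDeriv j g)) (x₀ x : ℝ) :
    ∃ ξ, g x - ∑ k ∈ range (n + 1), iteratedDeriv k g x₀ * (x - x₀) ^ k / k ! =
      iteratedDeriv (n + 1) g ξ * (x - x₀) ^ (n + 1) / (n + 1)! := by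
  rcases eq_or_ne x₀ x with rfl | hx
  · exact ⟨x₀, by simp [Finset.sum_range_succ']⟩
  have hs := uniqueDiffOn_uIcc hx
  have heq {k : ℕ} (hk : k ≤ n + 1) := iteratedDerivWithin_eqOn_iteratedDeriv (k := k) hs
    fun j hj => hg j (by omega)
  have hC : ContDiffOn ℝ n g (uIcc x₀ x) :=
    (contDiff_of_differentiable_iteratedDeriv fun m hm =>
      hg m (Nat.lt_succ_of_le (by exact_mod_cast hm))).contDiffOn
  obtain ⟨ξ, hξ, h⟩ := taylor_mean_remainder_lagrange hx hC
    ((hg n n.lt_succ_self).differentiableOn.congr fun y hy =>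
      heq n.le_succ (uIoo_subset_uIcc_self hy))
  refine ⟨ξ, ?_⟩
  rw [← heq le_rfl (uIoo_subset_uIcc_self hξ), ← h, taylor_within_apply]
  congr 1
  refine Finset.sum_congr rfl fun k hk => ?_
  rw [heq (by simp at hk; omega) left_mem_uIcc, smul_eq_mul]
  ring

noncomputable def taylorRemainderBound (B₂ B₃ x : ℝ) : ℝ :=
  min (B₂ * x ^ 2) (B₃ / 6 * |x| ^ 3)

theorem abs_taylor_two_remainder_le_s6 {g : ℝ → ℝ}
    (hg : ∀ j < 3, Differentiable ℝ (iteratedDeriv j g)) {B₂ B₃ : ℝ}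
    (hB₂ : ∀ t, |iteratedDeriv 2 g t| ≤ B₂) (hB₃ : ∀ t, |iteratedDeriv 3 g t| ≤ B₃) (t x : ℝ) :
    |g (t + x) - g t - deriv g t * x - iteratedDeriv 2 g t * x ^ 2 / 2| ≤
      taylorRemainderBound B₂ B₃ x := by
  obtain ⟨ξ₁, h₁⟩ := exists_taylor_lagrange_of_differentiable_iteratedDeriv (n := 1)
    (fun j hj => hg j (by omega)) t (t + x)
  obtain ⟨ξ₂, h₂⟩ := exists_taylor_lagrange_of_differentiable_iteratedDeriv (n := 2) hg t (t + x)
  simp only [Finset.sum_range_succ, Finset.sum_range_zero, iteratedDeriv_zero, iteratedDeriv_one,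
    add_sub_cancel_left] at h₁ h₂
  norm_num [Nat.factorial] at h₁ h₂
  refine le_min ?_ ?_
  · calc _ = |iteratedDeriv 2 g ξ₁ * x ^ 2 / 2 - iteratedDeriv 2 g t * x ^ 2 / 2| := by
          rw [← h₁]; ring_nf
      _ ≤ B₂ * x ^ 2 / 2 + B₂ * x ^ 2 / 2 := by
          refine (abs_sub _ _).trans (add_le_add ?_ ?_) <;>
          · rw [abs_div, abs_mul, abs_of_nonneg (sq_nonneg x), abs_two]
            gcongr
            exact hB₂ _
      _ = B₂ * x ^ 2 := by ring
  · calc _ = |iteratedDeriv 3 g ξ₂ * x ^ 3 / 6| := by rw [← h₂]; ring_nf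
      _ ≤ B₃ / 6 * |x| ^ 3 := by
          rw [abs_div, abs_mul, abs_pow, abs_of_pos (by norm_num : (0 : ℝ) < 6),
            div_mul_eq_mul_div]
          gcongr
          exact hB₃ _

theorem taylorRemainderBound_le {B₂ B₃ δ x : ℝ} (hB₃ : 0 ≤ B₃) (hδ : 0 ≤ δ) :
    taylorRemainderBound B₂ B₃ x ≤ (if δ < |x| then B₂ * x ^ 2 else 0) + B₃ / 6 * δ * x ^ 2 := by
  unfold taylorRemainderBound
  split_ifs with h
  · exact (min_le_left _ _).trans (le_add_of_nonneg_right (by positivity))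
  · calc _ ≤ B₃ / 6 * (|x| * x ^ 2) := by
          rw [← sq_abs x]; exact (min_le_right _ _).trans_eq (by ring)
      _ ≤ B₃ / 6 * (δ * x ^ 2) := by gcongr; exact not_lt.1 h
      _ = _ := by ring

end Taylor

theorem LipschitzWith.integrable_comp {Ω E F : Type*} [MeasurableSpace Ω] {μ : Measure Ω}
    [IsFiniteMeasure μ] [NormedAddCommGroup E] [NormedAddCommGroup F] {K : NNReal} {g : E → F}
    (hg : LipschitzWith K g) {Z : Ω → E} (hZ : Integrable Z μ) : Integrable (g ∘ Z) μ := by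
  have h : Integrable ((fun x => g x - g 0) ∘ Z) μ :=
    memLp_one_iff_integrable.1 <|
      (hg.sub (LipschitzWith.const (g 0))).comp_memLp (by simp) (memLp_one_iff_integrable.2 hZ)
  exact (h.add (integrable_const (g 0))).congr (.of_forall fun ω => by simp)

section Replacement

variable {Ω : Type*} [MeasurableSpace Ω] {μ : Measure Ω} {g : ℝ → ℝ} {B₁ B₂ B₃ : ℝ}

theorem integrable_taylorRemainderBound {V : Ω → ℝ} (hV : MemLp V 2 μ) (hB₂ : 0 ≤ B₂)
    (hB₃ : 0 ≤ B₃) : Integrable (fun ω => taylorRemainderBound B₂ B₃ (V ω)) μ := by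
  refine (hV.integrable_sq.const_mul B₂).mono' ?_ (.of_forall fun ω => ?_)
  · exact ((hV.integrable_sq.const_mul B₂).aestronglyMeasurable.aemeasurable.min
      ((hV.1.aemeasurable.abs.pow_const 3).const_mul _)).aestronglyMeasurable
  · rw [Real.norm_eq_abs, taylorRemainderBound,
      abs_of_nonneg (le_min (by positivity) (by positivity))]
    exact min_le_left _ _

theorem integral_taylorRemainderBound_inv_mul_le {Z : Ω → ℝ} (hZmeas : Measurable Z)
    (hZ : MemLp Z 2 μ) (hB₂ : 0 ≤ B₂) (hB₃ : 0 ≤ B₃) {δ s : ℝ} (hδ : 0 ≤ δ) (hs : 0 < s) :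
    ∫ ω, taylorRemainderBound B₂ B₃ (s⁻¹ * Z ω) ∂μ ≤
      (B₂ * ∫ ω in {ω | δ * s < |Z ω|}, Z ω ^ 2 ∂μ + B₃ / 6 * δ * ∫ ω, Z ω ^ 2 ∂μ) / s ^ 2 := by
  set S := {ω | δ * s < |Z ω|}
  have hS : MeasurableSet S := measurableSet_lt measurable_const hZmeas.abs
  have hZ2 := hZ.integrable_sq
  have hpt (ω : Ω) : taylorRemainderBound B₂ B₃ (s⁻¹ * Z ω) ≤
      (B₂ * S.indicator (fun ω => Z ω ^ 2) ω + B₃ / 6 * δ * Z ω ^ 2) / s ^ 2 := by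
    have hiff : δ < |s⁻¹ * Z ω| ↔ ω ∈ S := by
      rw [abs_mul, abs_of_pos (inv_pos.2 hs), inv_mul_eq_div, lt_div_iff₀ hs]; rfl
    refine (taylorRemainderBound_le hB₃ hδ).trans_eq ?_
    by_cases hω : ω ∈ S
    · rw [if_pos (hiff.2 hω), Set.indicator_of_mem hω]; ring
    · rw [if_neg (hiff.not.2 hω), Set.indicator_of_notMem hω]; ring
  calc _ ≤ ∫ ω, (B₂ * S.indicator (fun ω => Z ω ^ 2) ω + B₃ / 6 * δ * Z ω ^ 2) / s ^ 2 ∂μ :=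
        integral_mono (integrable_taylorRemainderBound (hZ.const_mul s⁻¹) hB₂ hB₃)
          ((((hZ2.indicator hS).const_mul B₂).add (hZ2.const_mul _)).div_const _) hpt
    _ = _ := by
        rw [integral_div, integral_add ((hZ2.indicator hS).const_mul B₂) (hZ2.const_mul _),
          integral_const_mul, integral_const_mul, integral_indicator hS]

theorem abs_integral_comp_add_sub_taylor_le_s6 [IsFiniteMeasure μ]
    (hg : ∀ j < 3, Differentiable ℝ (iteratedDeriv j g)) (hB₁ : ∀ t, |deriv g t| ≤ B₁)
    (hB₂ : ∀ t, |iteratedDeriv 2 g t| ≤ B₂) (hB₃ : ∀ t, |iteratedDeriv 3 g t| ≤ B₃)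
    {T V : Ω → ℝ} (hT : Integrable T μ) (hV : MemLp V 2 μ) (hTV : IndepFun T V μ) :
    |∫ ω, g (T ω + V ω) ∂μ - ∫ ω, g (T ω) ∂μ - (∫ ω, deriv g (T ω) ∂μ) * ∫ ω, V ω ∂μ -
        (∫ ω, iteratedDeriv 2 g (T ω) ∂μ) * (∫ ω, V ω ^ 2 ∂μ) / 2| ≤
      ∫ ω, taylorRemainderBound B₂ B₃ (V ω) ∂μ := by
  have hg₀ : Differentiable ℝ g := by simpa using hg 0 (by norm_num)
  have hg₁ : Differentiable ℝ (deriv g) := by simpa using hg 1 (by norm_num)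
  have hg₂ : Differentiable ℝ (iteratedDeriv 2 g) := hg 2 (by norm_num)
  have hLip : LipschitzWith B₁.toNNReal g :=
    lipschitzWith_of_nnnorm_deriv_le hg₀ fun t => by
      simpa [← NNReal.coe_le_coe, Real.coe_toNNReal', le_max_iff] using Or.inl (hB₁ t)
  have hVi : Integrable V μ := hV.integrable one_le_two
  have hgTV : Integrable (fun ω => g (T ω + V ω)) μ := hLip.integrable_comp (hT.add hVi)
  have hgT : Integrable (fun ω => g (T ω)) μ := hLip.integrable_comp hT
  have hg₁T : AEStronglyMeasurable (fun ω => deriv g (T ω)) μ :=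
    hg₁.continuous.comp_aestronglyMeasurable hT.1
  have hg₂T : AEStronglyMeasurable (fun ω => iteratedDeriv 2 g (T ω)) μ :=
    hg₂.continuous.comp_aestronglyMeasurable hT.1
  have hlin : Integrable (fun ω => deriv g (T ω) * V ω) μ :=
    hVi.bdd_mul hg₁T (.of_forall fun ω => hB₁ (T ω))
  have hquad : Integrable (fun ω => iteratedDeriv 2 g (T ω) * V ω ^ 2) μ :=
    hV.integrable_sq.bdd_mul hg₂T (.of_forall fun ω => hB₂ (T ω))
  have hlin_eq : ∫ ω, deriv g (T ω) * V ω ∂μ = (∫ ω, deriv g (T ω) ∂μ) * ∫ ω, V ω ∂μ :=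
    (hTV.comp hg₁.continuous.measurable measurable_id).integral_mul_eq_mul_integral hg₁T hV.1
  have hquad_eq : ∫ ω, iteratedDeriv 2 g (T ω) * V ω ^ 2 ∂μ =
      (∫ ω, iteratedDeriv 2 g (T ω) ∂μ) * ∫ ω, V ω ^ 2 ∂μ :=
    (hTV.comp hg₂.continuous.measurable (measurable_id.pow_const 2)).integral_mul_eq_mul_integral
      hg₂T (hV.1.pow 2)
  have hsplit : ∫ ω, g (T ω + V ω) ∂μ - ∫ ω, g (T ω) ∂μ -
      (∫ ω, deriv g (T ω) ∂μ) * ∫ ω, V ω ∂μ -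
      (∫ ω, iteratedDeriv 2 g (T ω) ∂μ) * (∫ ω, V ω ^ 2 ∂μ) / 2 =
      ∫ ω, (g (T ω + V ω) - g (T ω) - deriv g (T ω) * V ω -
        iteratedDeriv 2 g (T ω) * V ω ^ 2 / 2) ∂μ := by
    rw [integral_sub, integral_sub, integral_sub, integral_div, hlin_eq, hquad_eq]
    exacts [hgTV, hgT, hgTV.sub hgT, hlin, (hgTV.sub hgT).sub hlin, hquad.div_const 2]
  rw [hsplit]
  refine abs_integral_le_integral_abs.trans (integral_mono_of_nonneg
    (.of_forall fun _ => abs_nonneg _) ?_ (.of_forall fun ω => ?_))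
  · exact integrable_taylorRemainderBound hV ((abs_nonneg _).trans (hB₂ 0))
      ((abs_nonneg _).trans (hB₃ 0))
  · exact abs_taylor_two_remainder_le_s6 hg hB₂ hB₃ (T ω) (V ω)

theorem abs_integral_comp_add_sub_comp_add_le_s6 [IsFiniteMeasure μ]
    (hg : ∀ j < 3, Differentiable ℝ (iteratedDeriv j g)) (hB₁ : ∀ t, |deriv g t| ≤ B₁)
    (hB₂ : ∀ t, |iteratedDeriv 2 g t| ≤ B₂) (hB₃ : ∀ t, |iteratedDeriv 3 g t| ≤ B₃)
    {T V W : Ω → ℝ} (hT : Integrable T μ) (hV : MemLp V 2 μ) (hW : MemLp W 2 μ)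
    (hTV : IndepFun T V μ) (hTW : IndepFun T W μ)
    (hmean : ∫ ω, V ω ∂μ = ∫ ω, W ω ∂μ) (hsq : ∫ ω, V ω ^ 2 ∂μ = ∫ ω, W ω ^ 2 ∂μ) :
    |∫ ω, g (T ω + V ω) ∂μ - ∫ ω, g (T ω + W ω) ∂μ| ≤
      ∫ ω, taylorRemainderBound B₂ B₃ (V ω) ∂μ + ∫ ω, taylorRemainderBound B₂ B₃ (W ω) ∂μ := by
  have hV' := abs_integral_comp_add_sub_taylor_le_s6 hg hB₁ hB₂ hB₃ hT hV hTV
  have hW' := abs_integral_comp_add_sub_taylor_le_s6 hg hB₁ hB₂ hB₃ hT hW hTW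
  rw [hmean, hsq] at hV'
  set P := ∫ ω, g (T ω) ∂μ + (∫ ω, deriv g (T ω) ∂μ) * ∫ ω, W ω ∂μ +
    (∫ ω, iteratedDeriv 2 g (T ω) ∂μ) * (∫ ω, W ω ^ 2 ∂μ) / 2
  calc _ = |(∫ ω, g (T ω + V ω) ∂μ - P) - (∫ ω, g (T ω + W ω) ∂μ - P)| := by ring_nf
    _ ≤ _ := (abs_sub _ _).trans (add_le_add (by simpa only [P, sub_add_eq_sub_sub] using hV')
      (by simpa only [P, sub_add_eq_sub_sub] using hW'))

/-- The indices into `Sum.elim X Y` of the `k`-th hybrid sum `∑_{i<k} X i + ∑_{i≥k} Y i`. -/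
def hybridIndices (n k : ℕ) : Finset (Fin n ⊕ Fin n) :=
  ({i | (i : ℕ) < k} : Finset (Fin n)).disjSum {i | k ≤ (i : ℕ)}

theorem inr_mem_hybridIndices {n : ℕ} (i : Fin n) : .inr i ∈ hybridIndices n i := by
  simp [hybridIndices]

theorem hybridIndices_succ {n : ℕ} (i : Fin n) :
    hybridIndices n (i + 1) = insert (.inl i) ((hybridIndices n i).erase (.inr i)) := by
  ext (j | j) <;> simp [hybridIndices, Fin.ext_iff] <;> omega

theorem inl_notMem_erase_hybridIndices {n : ℕ} (i : Fin n) :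
    .inl i ∉ (hybridIndices n i).erase (.inr i) := by
  simp [hybridIndices]

theorem sum_hybridIndices_zero {M : Type*} [AddCommMonoid M] {n : ℕ} (f : Fin n ⊕ Fin n → M) :
    ∑ j ∈ hybridIndices n 0, f j = ∑ i, f (.inr i) := by
  simp [hybridIndices]

theorem sum_hybridIndices_self {M : Type*} [AddCommMonoid M] {n : ℕ} (f : Fin n ⊕ Fin n → M) :
    ∑ j ∈ hybridIndices n n, f j = ∑ i, f (.inl i) := by
  simp [hybridIndices, Finset.filter_false_of_mem fun (i : Fin n) _ => not_le.2 i.is_lt]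

theorem abs_integral_comp_sum_sub_comp_sum_le [IsFiniteMeasure μ]
    (hg : ∀ j < 3, Differentiable ℝ (iteratedDeriv j g)) (hB₁ : ∀ t, |deriv g t| ≤ B₁)
    (hB₂ : ∀ t, |iteratedDeriv 2 g t| ≤ B₂) (hB₃ : ∀ t, |iteratedDeriv 3 g t| ≤ B₃)
    {n : ℕ} {X Y : Fin n → Ω → ℝ} (hindep : iIndepFun (Sum.elim X Y) μ)
    (hX : ∀ i, MemLp (X i) 2 μ) (hY : ∀ i, MemLp (Y i) 2 μ)
    (hmean : ∀ i, ∫ ω, X i ω ∂μ = ∫ ω, Y i ω ∂μ)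
    (hsq : ∀ i, ∫ ω, X i ω ^ 2 ∂μ = ∫ ω, Y i ω ^ 2 ∂μ) :
    |∫ ω, g (∑ i, X i ω) ∂μ - ∫ ω, g (∑ i, Y i ω) ∂μ| ≤
      ∑ i, (∫ ω, taylorRemainderBound B₂ B₃ (X i ω) ∂μ +
        ∫ ω, taylorRemainderBound B₂ B₃ (Y i ω) ∂μ) := by
  set Z := Sum.elim X Y
  have hZ : ∀ j, MemLp (Z j) 2 μ := by rintro (i | i) <;> simp [Z, hX, hY]
  have hZae (j) : AEMeasurable (Z j) μ := (hZ j).1.aemeasurable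
  set a : ℕ → ℝ := fun k => ∫ ω, g (∑ j ∈ hybridIndices n k, Z j ω) ∂μ
  have hstep (i : Fin n) : |a (i + 1) - a i| ≤
      ∫ ω, taylorRemainderBound B₂ B₃ (X i ω) ∂μ + ∫ ω, taylorRemainderBound B₂ B₃ (Y i ω) ∂μ := by
    set L := (hybridIndices n i).erase (.inr i)
    have hL : Integrable (fun ω => ∑ j ∈ L, Z j ω) μ :=
      integrable_finsetSum _ fun j _ => (hZ j).integrable one_le_two
    have hsucc : a (i + 1) = ∫ ω, g (∑ j ∈ L, Z j ω + X i ω) ∂μ := by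
      simp only [a, hybridIndices_succ, Finset.sum_insert (inl_notMem_erase_hybridIndices i),
        add_comm (Z (.inl i) _)]
      rfl
    have hself : a i = ∫ ω, g (∑ j ∈ L, Z j ω + Y i ω) ∂μ := by
      simp only [a, ← Finset.add_sum_erase _ _ (inr_mem_hybridIndices i),
        add_comm (Z (.inr i) _)]
      rfl
    rw [hsucc, hself]
    exact abs_integral_comp_add_sub_comp_add_le_s6 hg hB₁ hB₂ hB₃ hL (hX i) (hY i)
      (by rw [← Finset.sum_fn]; exact
        hindep.indepFun_finsetSum_of_notMem₀ hZae (inl_notMem_erase_hybridIndices i))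
      (by rw [← Finset.sum_fn]; exact
        hindep.indepFun_finsetSum_of_notMem₀ hZae (Finset.notMem_erase (.inr i) _))
      (hmean i) (hsq i)
  have hends : ∫ ω, g (∑ i, X i ω) ∂μ - ∫ ω, g (∑ i, Y i ω) ∂μ = a n - a 0 := by
    simp only [a, Z, sum_hybridIndices_zero, sum_hybridIndices_self, Sum.elim_inl, Sum.elim_inr]
  calc _ = |a n - a 0| := by rw [hends]
    _ ≤ ∑ k ∈ range n, |a (k + 1) - a k| := by
        rw [← Finset.sum_range_sub]; exact Finset.abs_sum_le_sum_abs _ _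
    _ = ∑ i : Fin n, |a (i + 1) - a i| :=
        (Fin.sum_univ_eq_sum_range (fun k => |a (k + 1) - a k|) n).symm
    _ ≤ _ := Finset.sum_le_sum fun i _ => hstep i

theorem abs_integral_comp_mul_sum_sub_le_of_identDistrib [IsFiniteMeasure μ]
    (hg : ∀ j < 3, Differentiable ℝ (iteratedDeriv j g)) (hB₁ : ∀ t, |deriv g t| ≤ B₁)
    (hB₂ : ∀ t, |iteratedDeriv 2 g t| ≤ B₂) (hB₃ : ∀ t, |iteratedDeriv 3 g t| ≤ B₃)
    {n : ℕ} {X Y : Fin n → Ω → ℝ} (i₀ : Fin n) (hXid : ∀ i, IdentDistrib (X i) (X i₀) μ μ)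
    (hYid : ∀ i, IdentDistrib (Y i) (Y i₀) μ μ) (hindep : iIndepFun (Sum.elim X Y) μ)
    (hX : MemLp (X i₀) 2 μ) (hY : MemLp (Y i₀) 2 μ)
    (hmean : ∫ ω, X i₀ ω ∂μ = ∫ ω, Y i₀ ω ∂μ) (hsq : ∫ ω, X i₀ ω ^ 2 ∂μ = ∫ ω, Y i₀ ω ^ 2 ∂μ)
    (c : ℝ) :
    |∫ ω, g (c * ∑ i, X i ω) ∂μ - ∫ ω, g (c * ∑ i, Y i ω) ∂μ| ≤
      n * (∫ ω, taylorRemainderBound B₂ B₃ (c * X i₀ ω) ∂μ +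
        ∫ ω, taylorRemainderBound B₂ B₃ (c * Y i₀ ω) ∂μ) := by
  have hscaled : iIndepFun (Sum.elim (fun i ω => c * X i ω) (fun i ω => c * Y i ω)) μ := by
    convert hindep.comp (fun _ => (c * ·)) (fun _ => measurable_const_mul c) using 1
    ext (i | i) ω <;> rfl
  have hsqid {Z : Fin n → Ω → ℝ} (hZ : ∀ i, IdentDistrib (Z i) (Z i₀) μ μ) (i : Fin n) :
      ∫ ω, Z i ω ^ 2 ∂μ = ∫ ω, Z i₀ ω ^ 2 ∂μ :=
    ((hZ i).comp (measurable_id.pow_const 2)).integral_eq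
  have hφ : Measurable fun v => taylorRemainderBound B₂ B₃ (c * v) := by
    unfold taylorRemainderBound; fun_prop
  simp_rw [Finset.mul_sum]
  refine (abs_integral_comp_sum_sub_comp_sum_le hg hB₁ hB₂ hB₃ hscaled
    (fun i => ((hXid i).symm.memLp_snd hX).const_mul c)
    (fun i => ((hYid i).symm.memLp_snd hY).const_mul c)
    (fun i => by simp only [integral_const_mul, (hXid i).integral_eq, (hYid i).integral_eq, hmean])
    (fun i => by simp only [mul_pow, integral_const_mul, hsqid hXid i, hsqid hYid i, hsq])).trans ?_
  refine le_of_eq ((Finset.sum_congr rfl fun i _ => congrArg₂ (· + ·)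
    ((hXid i).comp hφ).integral_eq ((hYid i).comp hφ).integral_eq).trans ?_)
  rw [Finset.sum_const, Finset.card_univ, Fintype.card_fin, nsmul_eq_mul]
  rfl

end Replacement

theorem stmt6
    {Ω : Type} [MeasurableSpace Ω] {μ : Measure Ω} [IsProbabilityMeasure μ]
    {n : ℕ} (hn : 0 < n)
    (X Y : Fin n → Ω → ℝ)
    (hXmeas : ∀ i, Measurable (X i)) (hYmeas : ∀ i, Measurable (Y i))
    (hXid : ∀ i, IdentDistrib (X i) (X ⟨0, hn⟩) μ μ)
    (hYid : ∀ i, IdentDistrib (Y i) (Y ⟨0, hn⟩) μ μ)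
    (hindep : iIndepFun (Sum.elim X Y) μ)
    (hX2 : MemLp (X ⟨0, hn⟩) 2 μ) (hY2 : MemLp (Y ⟨0, hn⟩) 2 μ)
    (hXmean : ∫ ω, X ⟨0, hn⟩ ω ∂μ = 0) (hYmean : ∫ ω, Y ⟨0, hn⟩ ω ∂μ = 0)
    (hXvar : ∫ ω, (X ⟨0, hn⟩ ω) ^ 2 ∂μ = 1)
    (hYvar : ∫ ω, (Y ⟨0, hn⟩ ω) ^ 2 ∂μ = 1)
    (g : ℝ → ℝ) (hg : ∀ p < 3, Differentiable ℝ (iteratedDeriv p g))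
    (B1 B2 B3 : ℝ)
    (hB1 : ∀ t, |deriv g t| ≤ B1)
    (hB2 : ∀ t, |iteratedDeriv 2 g t| ≤ B2)
    (hB3 : ∀ t, |iteratedDeriv 3 g t| ≤ B3)
    (ε : ℝ) (hε : 0 < ε) :
    |(∫ ω, g ((Real.sqrt n)⁻¹ * ∑ i, X i ω) ∂μ) -
        ∫ ω, g ((Real.sqrt n)⁻¹ * ∑ i, Y i ω) ∂μ| ≤
      (B1 + B2) *
        ((∫ ω in {ω | ε * Real.sqrt n < |X ⟨0, hn⟩ ω|},
            (X ⟨0, hn⟩ ω) ^ 2 ∂μ) +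
          ∫ ω in {ω | ε * Real.sqrt n < |Y ⟨0, hn⟩ ω|},
            (Y ⟨0, hn⟩ ω) ^ 2 ∂μ) +
      2 * (B1 / 6 + B2 / 2 + B3 / 6) * ε := by
  have hB1_nonneg : 0 ≤ B1 := (abs_nonneg _).trans (hB1 0)
  have hB2_nonneg : 0 ≤ B2 := (abs_nonneg _).trans (hB2 0)
  have hB3_nonneg : 0 ≤ B3 := (abs_nonneg _).trans (hB3 0)
  have hs : 0 < Real.sqrt n := Real.sqrt_pos.2 (Nat.cast_pos.2 hn)
  have hs2 : Real.sqrt n ^ 2 = n := Real.sq_sqrt (Nat.cast_nonneg n)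
  have hRX := integral_taylorRemainderBound_inv_mul_le (hXmeas ⟨0, hn⟩) hX2 hB2_nonneg
    hB3_nonneg hε.le hs
  have hRY := integral_taylorRemainderBound_inv_mul_le (hYmeas ⟨0, hn⟩) hY2 hB2_nonneg
    hB3_nonneg hε.le hs
  rw [hXvar, hs2, le_div_iff₀ (Nat.cast_pos.2 hn)] at hRX
  rw [hYvar, hs2, le_div_iff₀ (Nat.cast_pos.2 hn)] at hRY
  have hIX : 0 ≤ ∫ ω in {ω | ε * Real.sqrt n < |X ⟨0, hn⟩ ω|}, X ⟨0, hn⟩ ω ^ 2 ∂μ :=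
    setIntegral_nonneg_of_ae_restrict (.of_forall fun _ => sq_nonneg _)
  have hIY : 0 ≤ ∫ ω in {ω | ε * Real.sqrt n < |Y ⟨0, hn⟩ ω|}, Y ⟨0, hn⟩ ω ^ 2 ∂μ :=
    setIntegral_nonneg_of_ae_restrict (.of_forall fun _ => sq_nonneg _)
  refine (abs_integral_comp_mul_sum_sub_le_of_identDistrib hg hB1 hB2 hB3 ⟨0, hn⟩ hXid hYid
    hindep hX2 hY2 (hXmean.trans hYmean.symm) (hXvar.trans hYvar.symm) _).trans ?_
  nlinarith [mul_nonneg hB1_nonneg hIX, mul_nonneg hB1_nonneg hIY, mul_nonneg hB1_nonneg hε.le,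
    mul_nonneg hB2_nonneg hε.le]
end
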